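/- arXiv:1907.05202 — 8 statements merged into one kernel-verified Lean document; each statement's English description precedes it below -/
import Mathlib

section
/- For a nonnegative integer k and α ∈ (0,1), the limit as x → ∞ of (∑_{n ≤ x} (log n)^k / n^α − I_k(x,α)) exists, where I_k(x,α) = x^{1−α} · ∑_{i=0}^{k} (−1)^i · (k!/(k−i)!) · (log x)^{k−i} / (1−α)^{i+1}. -/
/-!
The function `f x = (log x)^k / x^α` is eventually decreasing to `0`, so by the integral test
`∑_{M ≤ n ≤ x} f n - ∫_M^x f` converges: the terms `f n - ∫_n^{n+1} f` are nonnegative and bounded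
by the telescoping `f n - f (n + 1)`, and the leftover `∫_x^{⌊x⌋+1} f` is at most `f x`.
Integration by parts gives `I_{k+1} = x^{1-α} (log x)^{k+1} / (1-α) - (k+1)/(1-α) I_k`, from which
`I_k(·, α)` is an antiderivative of `f` by induction on `k`.
-/

open Filter Real Finset

/-- `I_k(x, α) = x^{1-α} ∑_{i=0}^{k} (-1)^i (k!/(k-i)!) (log x)^{k-i} / (1-α)^{i+1}` -/
noncomputable def Ik (k : ℕ) (x α : ℝ) : ℝ :=
  x ^ (1 - α) * ∑ i ∈ Finset.range (k + 1),
    (-1 : ℝ) ^ i * ((Nat.factorial k : ℝ) / (Nat.factorial (k - i) : ℝ)) *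
      Real.log x ^ (k - i) / (1 - α) ^ (i + 1)

open Topology intervalIntegral

namespace AntitoneOn

variable {f : ℝ → ℝ} {a : ℝ}

theorem nonneg_of_tendsto_atTop_zero (hf : AntitoneOn f (Set.Ici a))
    (hlim : Tendsto f atTop (𝓝 0)) {x : ℝ} (hx : a ≤ x) : 0 ≤ f x :=
  le_of_tendsto hlim ((eventually_ge_atTop x).mono fun _ hy => hf hx (hx.trans hy) hy)

theorem intervalIntegrable_of_le (hf : AntitoneOn f (Set.Ici a)) {b c : ℝ} (hb : a ≤ b)
    (hc : a ≤ c) : IntervalIntegrable f MeasureTheory.volume b c :=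
  (hf.mono fun _ ht => (le_min hb hc).trans ht.1).intervalIntegrable

theorem integral_self_add_one_mem_Icc (hf : AntitoneOn f (Set.Ici a)) {x : ℝ} (hx : a ≤ x) :
    ∫ t in x..x + 1, f t ∈ Set.Icc (f (x + 1)) (f x) := by
  have hint := hf.intervalIntegrable_of_le (c := x + 1) hx (by linarith)
  have hx1 : x ≤ x + 1 := by linarith
  constructor
  · simpa using integral_mono_on hx1 intervalIntegrable_const hint
      fun t ht => hf (hx.trans ht.1) (by simp only [Set.mem_Ici]; linarith) ht.2
  · simpa using integral_mono_on hx1 hint intervalIntegrable_const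
      fun t ht => hf hx (hx.trans ht.1) ht.1

theorem exists_tendsto_sum_Ico_sub_integral {M : ℕ} (hf : AntitoneOn f (Set.Ici (M : ℝ)))
    (hlim : Tendsto f atTop (𝓝 0)) :
    ∃ c, Tendsto (fun m : ℕ => ∑ n ∈ Ico M m, f n - ∫ t in (M : ℝ)..m, f t) atTop (𝓝 c) := by
  set g : ℕ → ℝ := fun n => f n - ∫ t in (n : ℝ)..n + 1, f t
  have hg : ∀ j, g (M + j) ∈ Set.Icc 0 (f (M + j : ℕ) - f (M + (j + 1) : ℕ)) := by
    intro j
    have := hf.integral_self_add_one_mem_Icc (x := (M + j : ℕ)) (by simp)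
    simp only [g, Set.mem_Icc]
    push_cast [← add_assoc] at this ⊢
    constructor <;> linarith [this.1, this.2]
  have hsummable : Summable fun j => g (M + j) := by
    refine summable_of_sum_range_le (c := f M) (fun j => (hg j).1) fun j => ?_
    calc ∑ i ∈ range j, g (M + i)
        ≤ ∑ i ∈ range j, (f (M + i : ℕ) - f (M + (i + 1) : ℕ)) := sum_le_sum fun i _ => (hg i).2
      _ = f M - f (M + j : ℕ) := sum_range_sub' (fun i => f (M + i : ℕ)) j
      _ ≤ f M := by linarith [hf.nonneg_of_tendsto_atTop_zero hlim (x := (M + j : ℕ)) (by simp)]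
  refine ⟨_, (tendsto_add_atTop_iff_nat M).mp (hsummable.hasSum.tendsto_sum_nat.congr fun j => ?_)⟩
  have hint : ∀ n ∈ Set.Ico M (j + M), IntervalIntegrable f MeasureTheory.volume n (n + 1 : ℕ) :=
    fun n hn => hf.intervalIntegrable_of_le (by exact_mod_cast hn.1)
      (by exact_mod_cast hn.1.trans (Nat.le_succ n))
  rw [← sum_integral_adjacent_intervals_Ico (by omega) hint, ← sum_sub_distrib,
    sum_Ico_eq_sum_range, Nat.add_sub_cancel]
  simp only [g]
  push_cast
  rfl

theorem tendsto_integral_floor_add_one (hf : AntitoneOn f (Set.Ici a))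
    (hlim : Tendsto f atTop (𝓝 0)) :
    Tendsto (fun x => ∫ t in x..(⌊x⌋₊ + 1 : ℝ), f t) atTop (𝓝 0) := by
  refine squeeze_zero' ?_ ?_ hlim
  · filter_upwards [eventually_ge_atTop a] with x hx
    exact integral_nonneg (Nat.lt_floor_add_one x).le
      fun t ht => hf.nonneg_of_tendsto_atTop_zero hlim (hx.trans ht.1)
  · filter_upwards [eventually_ge_atTop (max a 0)] with x hx
    have hxa : a ≤ x := le_of_max_le_left hx
    calc ∫ t in x..(⌊x⌋₊ + 1 : ℝ), f t ≤ ∫ t in x..x + 1, f t := by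
          refine integral_mono_interval le_rfl (Nat.lt_floor_add_one x).le
            (by linarith [Nat.floor_le (le_of_max_le_right hx)]) ?_
            (hf.intervalIntegrable_of_le hxa (by linarith))
          exact MeasureTheory.ae_restrict_of_forall_mem measurableSet_Ioc
            fun t ht => hf.nonneg_of_tendsto_atTop_zero hlim (hxa.trans ht.1.le)
      _ ≤ f x := (hf.integral_self_add_one_mem_Icc hxa).2

theorem exists_tendsto_sum_Icc_floor_sub_integral {M : ℕ} (hf : AntitoneOn f (Set.Ici (M : ℝ)))
    (hlim : Tendsto f atTop (𝓝 0)) :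
    ∃ c, Tendsto (fun x => ∑ n ∈ Icc M ⌊x⌋₊, f n - ∫ t in (M : ℝ)..x, f t) atTop (𝓝 c) := by
  obtain ⟨c, hc⟩ := hf.exists_tendsto_sum_Ico_sub_integral hlim
  have hfloor : Tendsto (fun x : ℝ => ⌊x⌋₊ + 1) atTop atTop :=
    (tendsto_add_atTop_nat 1).comp tendsto_nat_floor_atTop
  refine ⟨c + 0, ((hc.comp hfloor).add (hf.tendsto_integral_floor_add_one hlim)).congr' ?_⟩
  filter_upwards [eventually_ge_atTop (M : ℝ)] with x hx
  rw [Function.comp_apply, ← integral_add_adjacent_intervals (b := x)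
    (hf.intervalIntegrable_of_le le_rfl hx) (hf.intervalIntegrable_of_le hx (by
      push_cast; linarith [Nat.lt_floor_add_one x])), Ico_add_one_right_eq_Icc]
  push_cast
  ring

end AntitoneOn

theorem Ik_zero (x α : ℝ) : Ik 0 x α = x ^ (1 - α) / (1 - α) := by
  simp [Ik, div_eq_mul_inv]

theorem Ik_succ (k : ℕ) (x α : ℝ) :
    Ik (k + 1) x α = x ^ (1 - α) * log x ^ (k + 1) / (1 - α) - (k + 1) / (1 - α) * Ik k x α := by
  have hterm : ∀ i ∈ range (k + 1),
      (-1 : ℝ) ^ (i + 1) * ((k + 1).factorial / (k + 1 - (i + 1)).factorial : ℝ) *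
        log x ^ (k + 1 - (i + 1)) / (1 - α) ^ (i + 1 + 1) =
      -((k + 1) / (1 - α)) *
        ((-1 : ℝ) ^ i * (k.factorial / (k - i).factorial : ℝ) * log x ^ (k - i) / (1 - α) ^ (i + 1)) := by
    intro i _
    rw [Nat.add_sub_add_right, Nat.factorial_succ]
    push_cast
    generalize 1 - α = β
    ring
  rw [Ik, Ik, sum_range_succ', sum_congr rfl hterm, ← mul_sum]
  simp only [pow_zero, Nat.sub_zero, one_mul, zero_add, pow_one]
  rw [div_self (by positivity)]
  ring

theorem hasDerivAt_rpow_mul_log_pow (s : ℝ) (m : ℕ) {x : ℝ} (hx : 0 < x) :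
    HasDerivAt (fun y => y ^ s * log y ^ (m + 1))
      (x ^ (s - 1) * (s * log x ^ (m + 1) + (m + 1) * log x ^ m)) x := by
  refine ((hasDerivAt_rpow_const (p := s) (Or.inl hx.ne')).mul
    ((hasDerivAt_log hx.ne').fun_pow (m + 1))).congr_deriv ?_
  rw [rpow_sub_one hx.ne']
  push_cast
  field_simp

theorem hasDerivAt_Ik (k : ℕ) {α x : ℝ} (hα : α ≠ 1) (hx : 0 < x) :
    HasDerivAt (fun y => Ik k y α) (log x ^ k / x ^ α) x := by
  have hα' : 1 - α ≠ 0 := sub_ne_zero.mpr hα.symm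
  have hpow : x ^ (1 - α - 1) = (x ^ α)⁻¹ := by
    rw [sub_sub_cancel_left, rpow_neg hx.le]
  induction k with
  | zero =>
    simp only [Ik_zero]
    refine ((hasDerivAt_rpow_const (p := 1 - α) (Or.inl hx.ne')).div_const (1 - α)).congr_deriv ?_
    rw [hpow]
    field_simp
  | succ k ih =>
    simp only [Ik_succ]
    refine (((hasDerivAt_rpow_mul_log_pow (1 - α) k hx).div_const (1 - α)).sub
      (ih.const_mul ((k + 1) / (1 - α)))).congr_deriv ?_
    rw [hpow]
    field_simp
    ring

theorem integral_log_pow_div_rpow (k : ℕ) {α a b : ℝ} (hα : α ≠ 1) (ha : 0 < a) (hb : 0 < b) :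
    ∫ t in a..b, log t ^ k / t ^ α = Ik k b α - Ik k a α := by
  have hpos : ∀ t ∈ Set.uIcc a b, 0 < t := fun t ht =>
    lt_of_lt_of_le (lt_min ha hb) ht.1
  refine integral_eq_sub_of_hasDerivAt (fun t ht => hasDerivAt_Ik k hα (hpos t ht)) ?_
  refine ContinuousOn.intervalIntegrable fun t ht => ?_
  have ht := hpos t ht
  exact (((continuousAt_log ht.ne').pow k).div (continuousAt_rpow_const t α (Or.inl ht.ne'))
    (rpow_pos_of_pos ht α).ne').continuousWithinAt

theorem antitoneOn_log_pow_div_rpow (k : ℕ) {α : ℝ} (hα : 0 < α) :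
    AntitoneOn (fun x => log x ^ k / x ^ α) (Set.Ici (exp (k / α))) := by
  cases k with
  | zero =>
    simp only [pow_zero, CharP.cast_eq_zero, zero_div, exp_zero, one_div]
    intro x hx y _ hxy
    have hx0 : 0 < x := zero_lt_one.trans_le hx
    exact inv_anti₀ (rpow_pos_of_pos hx0 α) (rpow_le_rpow hx0.le hxy hα.le)
  | succ m =>
    set β := α / (m + 1)
    have hβ : 0 < β := by positivity
    have hexp : exp (((m + 1 : ℕ) : ℝ) / α) = exp β⁻¹ := by simp [β]
    have hpow : ∀ x, 0 < x → log x ^ (m + 1) / x ^ α = (log x / x ^ β) ^ (m + 1) := by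
      intro x hx
      rw [div_pow, ← rpow_natCast (x ^ β), ← rpow_mul hx.le]
      push_cast
      rw [div_mul_cancel₀ α (by positivity)]
    rw [hexp]
    intro x hx y hy hxy
    have hx0 : 0 < x := (exp_pos _).trans_le hx
    have hy0 : 0 < y := hx0.trans_le hxy
    simp only [hpow x hx0, hpow y hy0]
    refine pow_le_pow_left₀ ?_ (log_div_self_rpow_antitoneOn hβ hx hy hxy) (m + 1)
    have : 0 ≤ log y := log_nonneg (le_trans (one_le_exp (inv_pos.mpr hβ).le) hy)
    positivity

theorem tendsto_log_pow_div_rpow_atTop (k : ℕ) {α : ℝ} (hα : 0 < α) :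
    Tendsto (fun x => log x ^ k / x ^ α) atTop (𝓝 0) := by
  simpa only [rpow_natCast] using (isLittleO_log_rpow_rpow_atTop k hα).tendsto_div_nhds_zero

theorem stmt0 (k : ℕ) (α : ℝ) (hα : α ∈ Set.Ioo (0 : ℝ) 1) :
    ∃ c : ℝ, Tendsto
      (fun x : ℝ => (∑ n ∈ Finset.Icc 1 ⌊x⌋₊, Real.log n ^ k / (n : ℝ) ^ α) - Ik k x α)
      atTop (nhds c) := by
  obtain ⟨hα0, hα1⟩ := hα
  set M := ⌈exp (k / α)⌉₊
  have hM : 0 < (M : ℝ) := (exp_pos _).trans_le (Nat.le_ceil _)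
  have hanti : AntitoneOn (fun x => log x ^ k / x ^ α) (Set.Ici (M : ℝ)) :=
    (antitoneOn_log_pow_div_rpow k hα0).mono (Set.Ici_subset_Ici.mpr (Nat.le_ceil _))
  obtain ⟨c, hc⟩ :=
    hanti.exists_tendsto_sum_Icc_floor_sub_integral (tendsto_log_pow_div_rpow_atTop k hα0)
  refine ⟨c + (∑ n ∈ Ico 1 M, log n ^ k / (n : ℝ) ^ α - Ik k M α), (hc.add_const _).congr' ?_⟩
  filter_upwards [eventually_ge_atTop (M : ℝ)] with x hx
  have hM1 : 1 ≤ M := by exact_mod_cast hM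
  have hMx : M ≤ ⌊x⌋₊ + 1 := (Nat.le_floor hx).trans (Nat.le_succ _)
  rw [integral_log_pow_div_rpow k hα1.ne hM (hM.trans_le hx), ← Ico_add_one_right_eq_Icc,
    ← Ico_add_one_right_eq_Icc, ← sum_Ico_consecutive _ hM1 hMx]
  ring
end

section
/- For positive integers r ≤ m, q and α ∈ (0,1), k ∈ ℕ, the distribution relation ∑_{j=0}^{q−1} ζ_k(α, r + j·m, m·q) = ζ_k(α, r, m) holds. -/
/-!
The classes `r + j * m` (mod `m * q`), `j < q`, partition the class `r` (mod `m`), so the partial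
sums of the `q` finer series add up to the partial sum of the coarser one, while the `q` main terms
`I_k(x, α) / (m * q)` add up to `I_k(x, α) / m`. The two limits then agree by uniqueness of limits.
-/

open Filter Real Finset

noncomputable def Hk (k : ℕ) (α : ℝ) (r q : ℕ) (x : ℝ) : ℝ :=
  ∑ n ∈ Finset.Icc 1 ⌊x⌋₊, if n % q = r % q then Real.log n ^ k / (n : ℝ) ^ α else 0

theorem Nat.exists_lt_modEq_add_mul {m q r n : ℕ} (hq : 0 < q) (h : n ≡ r [MOD m]) :
    ∃ j < q, n ≡ r + j * m [MOD m * q] := by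
  obtain ⟨d, hd⟩ := Nat.modEq_iff_dvd.mp h.symm
  have hq' : (0 : ℤ) < q := by exact_mod_cast hq
  have hdq : 0 ≤ d % q := Int.emod_nonneg _ hq'.ne'
  refine ⟨(d % q).toNat, by have := Int.emod_lt_of_pos d hq'; omega, ?_⟩
  refine Nat.modEq_iff_dvd.mpr ⟨-(d / q), ?_⟩
  push_cast
  rw [Int.toNat_of_nonneg hdq, Int.emod_def]
  linear_combination -hd

theorem Nat.eq_of_add_mul_modEq_add_mul {m q r i j : ℕ} (hm : m ≠ 0) (hi : i < q) (hj : j < q)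
    (h : r + i * m ≡ r + j * m [MOD m * q]) : i = j := by
  rw [mul_comm m q] at h
  exact ((h.add_left_cancel' r).mul_right_cancel' hm).eq_of_lt_of_lt hi hj

theorem sum_ite_modEq_add_mul {M : Type*} [AddCommMonoid M] {m q : ℕ} (hm : m ≠ 0) (hq : 0 < q)
    (n r : ℕ) (a : M) :
    ∑ j ∈ range q, (if n ≡ r + j * m [MOD m * q] then a else 0) =
      if n ≡ r [MOD m] then a else 0 := by
  by_cases h : n ≡ r [MOD m]
  · obtain ⟨j₀, hj₀, hnj₀⟩ := Nat.exists_lt_modEq_add_mul hq h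
    rw [if_pos h, sum_eq_single_of_mem j₀ (mem_range.mpr hj₀), if_pos hnj₀]
    intro j hj hne
    exact if_neg fun hnj => hne <|
      Nat.eq_of_add_mul_modEq_add_mul hm (mem_range.mp hj) hj₀ (hnj.symm.trans hnj₀)
  · rw [if_neg h]
    refine sum_eq_zero fun j _ => if_neg fun hnj => h ?_
    exact (hnj.of_mul_right q).trans (Nat.add_mul_modulus_modEq_iff.mpr rfl)

theorem sum_Hk_add_mul (k : ℕ) (α : ℝ) {m q : ℕ} (hm : m ≠ 0) (hq : 0 < q) (r : ℕ) (x : ℝ) :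
    ∑ j ∈ range q, Hk k α (r + j * m) (m * q) x = Hk k α r m x := by
  simp only [Hk]
  rw [sum_comm]
  exact sum_congr rfl fun n _ => sum_ite_modEq_add_mul hm hq n r _

theorem stmt5_general (k : ℕ) (α : ℝ) (r m q : ℕ)
    (hr : 0 < r) (hrm : r ≤ m) (hq : 0 < q)
    (Z : ℕ → ℝ) (W : ℝ)
    (hZ : ∀ j ∈ Finset.range q,
      Tendsto (fun x : ℝ => Hk k α (r + j * m) (m * q) x - Ik k x α / (m * q)) atTop
        (nhds (Z j)))
    (hW : Tendsto (fun x : ℝ => Hk k α r m x - Ik k x α / m) atTop (nhds W)) :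
    ∑ j ∈ Finset.range q, Z j = W := by
  have hm : m ≠ 0 := (hr.trans_le hrm).ne'
  refine tendsto_nhds_unique ((tendsto_finsetSum _ hZ).congr fun x => ?_) hW
  rw [sum_sub_distrib, sum_Hk_add_mul k α hm hq, sum_const, card_range, nsmul_eq_mul]
  field_simp

/-- `∑_{j=0}^{q-1} ζ_k(α, r+jm, mq) = ζ_k(α, r, m)`. -/
theorem stmt5 (k : ℕ) (α : ℝ) (hα : α ∈ Set.Ioo (0 : ℝ) 1) (r m q : ℕ)
    (hr : 0 < r) (hrm : r ≤ m) (hq : 0 < q)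
    (Z : ℕ → ℝ) (W : ℝ)
    (hZ : ∀ j ∈ Finset.range q,
      Tendsto (fun x : ℝ => Hk k α (r + j * m) (m * q) x - Ik k x α / (m * q)) atTop
        (nhds (Z j)))
    (hW : Tendsto (fun x : ℝ => Hk k α r m x - Ik k x α / m) atTop (nhds W)) :
    ∑ j ∈ Finset.range q, Z j = W :=
  stmt5_general k α r m q hr hrm hq Z W hZ hW
end

section
/- If d is a common divisor of positive integers r and q, then for α ∈ (0,1) and k ∈ ℕ: ζ_k(α,r,q) = ∑_{j=0}^{k} C(k,j) (log d)^{k−j} / d^α · ζ_j(α, r/d, q/d). -/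
/-!
A residue class `n ≡ r (mod q)` with `d ∣ r, q` consists of the multiples `n = d m` with
`m ≡ r/d (mod q/d)`, and `log (d m) ^ k / (d m) ^ α` expands binomially into the terms
`log m ^ j / m ^ α`. So the partial sum for `(r, q)` up to `x` is the combination
`∑ C(k,j) (log d)^(k-j) d^(-α) ·` (partial sum of order `j` for `(r/d, q/d)` up to `x/d`).
The main terms obey the same identity: `I_k(x) = x^(1-α) P_k(log x)`, where
`P_k(L) = ∑ C(k,i) c_i L^(k-i)` with `c_i = (-1)^i i! / (1-α)^(i+1)` is an Appell sequence,
`P_k(a + b) = ∑ C(k,j) a^(k-j) P_j(b)`, and `x^(1-α) / q = d^(-α) (x/d)^(1-α) / (q/d)`.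
Letting `x → ∞` gives the identity for the limits.
-/

open Filter Real Finset

theorem sum_choose_mul_add_pow {R : Type*} [CommSemiring R] (c : ℕ → R) (k : ℕ) (D L : R) :
    ∑ i ∈ range (k + 1), (k.choose i : R) * c i * (D + L) ^ (k - i) =
      ∑ j ∈ range (k + 1), (k.choose j : R) * D ^ (k - j) *
        ∑ i ∈ range (j + 1), (j.choose i : R) * c i * L ^ (j - i) := by
  simp only [mul_sum, range_eq_Ico]
  rw [← sum_Ico_Ico_comm]
  refine sum_congr rfl fun i hi => ?_
  have hik : i ≤ k := Nat.lt_succ_iff.mp (mem_Ico.mp hi).2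
  rw [sum_Ico_eq_sum_range, show k + 1 - i = k - i + 1 by omega, add_comm D, add_pow, mul_sum]
  refine sum_congr rfl fun m hm => ?_
  have hm : m ≤ k - i := Nat.lt_succ_iff.mp (mem_range.mp hm)
  have hchoose :
      (k.choose (i + m) : R) * ((i + m).choose i : R) = k.choose i * (k - i).choose m := by
    rw [← Nat.cast_mul, ← Nat.cast_mul, Nat.choose_mul (Nat.le_add_right i m),
      Nat.add_sub_cancel_left]
  rw [show k - (i + m) = k - i - m by omega, Nat.add_sub_cancel_left]
  calc (k.choose i : R) * c i * (L ^ m * D ^ (k - i - m) * (k - i).choose m)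
      = (k.choose i * (k - i).choose m) * (D ^ (k - i - m) * c i * L ^ m) := by ring
    _ = _ := by rw [← hchoose]; ring

theorem factorial_div_factorial_sub {k i : ℕ} (h : i ≤ k) :
    (k.factorial : ℝ) / (k - i).factorial = k.choose i * i.factorial := by
  rw [div_eq_iff (by positivity)]
  exact_mod_cast (Nat.choose_mul_factorial_mul_factorial h).symm

theorem Ik_eq_sum_choose (k : ℕ) (x α : ℝ) :
    Ik k x α = x ^ (1 - α) * ∑ i ∈ range (k + 1),
      (k.choose i : ℝ) * ((-1) ^ i * i.factorial / (1 - α) ^ (i + 1)) * log x ^ (k - i) := by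
  rw [Ik]
  congr 1
  refine sum_congr rfl fun i hi => ?_
  rw [factorial_div_factorial_sub (Nat.lt_succ_iff.mp (mem_range.mp hi))]
  ring

theorem Ik_eq_rpow_mul_sum_Ik_div {d x : ℝ} (hd : 0 < d) (hx : 0 < x) (k : ℕ) (α : ℝ) :
    Ik k x α = d ^ (1 - α) *
      ∑ j ∈ range (k + 1), (k.choose j : ℝ) * log d ^ (k - j) * Ik j (x / d) α := by
  have hxd : 0 < x / d := div_pos hx hd
  have hrpow : x ^ (1 - α) = d ^ (1 - α) * (x / d) ^ (1 - α) := by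
    rw [← mul_rpow hd.le hxd.le, mul_div_cancel₀ _ hd.ne']
  have hlog : log x = log d + log (x / d) := by
    rw [log_div hx.ne' hd.ne', add_sub_cancel]
  simp only [Ik_eq_sum_choose]
  rw [hrpow, hlog, sum_choose_mul_add_pow, mul_assoc]
  congr 1
  rw [mul_sum]
  exact sum_congr rfl fun j _ => by ring

theorem sum_Icc_filter_modEq_mul {M : Type*} [AddCommMonoid M] (f : ℕ → M) {d : ℕ} (hd : d ≠ 0)
    (N r q : ℕ) :
    ∑ n ∈ Icc 1 N with n ≡ d * r [MOD d * q], f n =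
      ∑ m ∈ Icc 1 (N / d) with m ≡ r [MOD q], f (d * m) := by
  symm
  refine sum_nbij (d * ·) ?_ (fun m _ m' _ h => mul_left_cancel₀ hd h) ?_ fun _ _ => rfl
  · intro m hm
    simp only [mem_filter, mem_Icc] at hm ⊢
    obtain ⟨⟨hm1, hmN⟩, hmod⟩ := hm
    refine ⟨⟨Nat.one_le_iff_ne_zero.mpr (mul_ne_zero hd (by omega)), ?_⟩, hmod.mul_left' d⟩
    rw [mul_comm]
    exact (Nat.le_div_iff_mul_le (Nat.pos_of_ne_zero hd)).mp hmN
  · intro n hn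
    simp only [coe_filter, mem_Icc, Set.mem_ofPred_eq] at hn
    obtain ⟨⟨hn1, hnN⟩, hmod⟩ := hn
    obtain ⟨m, rfl⟩ := (hmod.dvd_iff (dvd_mul_right d q)).mpr (dvd_mul_right d r)
    refine ⟨m, ?_, rfl⟩
    simp only [coe_filter, mem_Icc, Set.mem_ofPred_eq]
    refine ⟨⟨Nat.one_le_iff_ne_zero.mpr (by rintro rfl; simp at hn1), ?_⟩,
      Nat.ModEq.mul_left_cancel' hd hmod⟩
    rw [Nat.le_div_iff_mul_le (Nat.pos_of_ne_zero hd), mul_comm]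
    exact hnN

theorem log_mul_pow_div_mul_rpow {a b : ℝ} (ha : 0 < a) (hb : 0 < b) (k : ℕ) (α : ℝ) :
    log (a * b) ^ k / (a * b) ^ α =
      ∑ j ∈ range (k + 1), (k.choose j : ℝ) * log a ^ (k - j) / a ^ α * (log b ^ j / b ^ α) := by
  rw [log_mul ha.ne' hb.ne', mul_rpow ha.le hb.le, add_comm, add_pow, sum_div]
  refine sum_congr rfl fun j _ => ?_
  field_simp

theorem Hk_mul_mul {d : ℕ} (hd : d ≠ 0) (k : ℕ) (α : ℝ) (r q : ℕ) (x : ℝ) :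
    Hk k α (d * r) (d * q) x = ∑ j ∈ range (k + 1),
      (k.choose j : ℝ) * log d ^ (k - j) / (d : ℝ) ^ α * Hk j α r q (x / d) := by
  have hd' : (0 : ℝ) < d := by positivity
  simp only [Hk, ← sum_filter, mul_sum, Nat.floor_div_natCast]
  rw [sum_comm]
  refine (sum_Icc_filter_modEq_mul _ hd _ r q).trans (sum_congr rfl fun m hm => ?_)
  have hm : (0 : ℝ) < m := by
    simp only [mem_filter, mem_Icc] at hm
    exact_mod_cast hm.1.1
  rw [Nat.cast_mul, log_mul_pow_div_mul_rpow hd' hm]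

theorem Hk_sub_Ik_mul_mul {d : ℕ} (hd : d ≠ 0) (k : ℕ) (α : ℝ) (r q : ℕ) {x : ℝ} (hx : 0 < x) :
    Hk k α (d * r) (d * q) x - Ik k x α / (d * q : ℕ) = ∑ j ∈ range (k + 1),
      (k.choose j : ℝ) * log d ^ (k - j) / (d : ℝ) ^ α *
        (Hk j α r q (x / d) - Ik j (x / d) α / q) := by
  have hd' : (0 : ℝ) < d := by positivity
  have hIk : Ik k x α / (d * q : ℕ) = ∑ j ∈ range (k + 1),
      (k.choose j : ℝ) * log d ^ (k - j) / (d : ℝ) ^ α * (Ik j (x / d) α / q) := by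
    rw [Ik_eq_rpow_mul_sum_Ik_div hd' hx, Nat.cast_mul, ← div_div, rpow_sub hd', rpow_one,
      mul_sum, sum_div, sum_div]
    refine sum_congr rfl fun j _ => ?_
    field_simp
  simp only [Hk_mul_mul hd, hIk, mul_sub, sum_sub_distrib]

theorem stmt7_general (k : ℕ) (α : ℝ) (r q d : ℕ)
    (hr : 0 < r) (hdr : d ∣ r) (hdq : d ∣ q)
    (Z : ℝ) (W : ℕ → ℝ)
    (hZ : Tendsto (fun x : ℝ => Hk k α r q x - Ik k x α / q) atTop (nhds Z))
    (hW : ∀ j ∈ Finset.range (k + 1),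
      Tendsto (fun x : ℝ => Hk j α (r / d) (q / d) x - Ik j x α / (q / d : ℕ)) atTop
        (nhds (W j))) :
    Z = ∑ j ∈ Finset.range (k + 1),
        (Nat.choose k j : ℝ) * Real.log d ^ (k - j) / (d : ℝ) ^ α * W j := by
  have hd : d ≠ 0 := (Nat.pos_of_dvd_of_pos hdr hr).ne'
  obtain ⟨r, rfl⟩ := hdr
  obtain ⟨q, rfl⟩ := hdq
  simp only [Nat.mul_div_cancel_left _ (Nat.pos_of_ne_zero hd)] at hW
  have hdiv : Tendsto (fun x : ℝ => x / d) atTop atTop :=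
    tendsto_id.atTop_div_const (by positivity)
  refine tendsto_nhds_unique hZ ((tendsto_finsetSum _ fun j hj =>
    ((hW j hj).comp hdiv).const_mul _).congr' ?_)
  filter_upwards [eventually_gt_atTop 0] with x hx
  exact (Hk_sub_Ik_mul_mul hd k α r q hx).symm

/-- If `d ∣ r` and `d ∣ q` then
`ζ_k(α,r,q) = ∑_{j=0}^{k} C(k,j) (log d)^{k-j} / d^α · ζ_j(α, r/d, q/d)`. -/
theorem stmt7 (k : ℕ) (α : ℝ) (hα : α ∈ Set.Ioo (0 : ℝ) 1) (r q d : ℕ)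
    (hr : 0 < r) (hq : 0 < q) (hdr : d ∣ r) (hdq : d ∣ q)
    (Z : ℝ) (W : ℕ → ℝ)
    (hZ : Tendsto (fun x : ℝ => Hk k α r q x - Ik k x α / q) atTop (nhds Z))
    (hW : ∀ j ∈ Finset.range (k + 1),
      Tendsto (fun x : ℝ => Hk j α (r / d) (q / d) x - Ik j x α / (q / d : ℕ)) atTop
        (nhds (W j))) :
    Z = ∑ j ∈ Finset.range (k + 1),
        (Nat.choose k j : ℝ) * Real.log d ^ (k - j) / (d : ℝ) ^ α * W j :=
  stmt7_general k α r q d hr hdr hdq Z W hZ hW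
end

section
/- For α ∈ (0,1) and positive integers r ≤ q, the partial zeta function ζ(s;r,q) = ∑_{n ≡ r mod q} n^{−s} (analytically continued to Re(s) > 0, s ≠ 1) has Taylor expansion ζ(s;r,q) = ∑_{m=0}^{∞} ((−1)^m/m!) ζ_m(α,r,q) (s−α)^m, valid for |s−α| < |α−1|. -/
open Filter Real Finset HurwitzZeta

/-- The partial zeta function `ζ(s; r, q) = q^{-s} ζ(s, r/q)`, analytically continued. -/
noncomputable def partialZeta (r q : ℕ) (s : ℂ) : ℂ :=
  (q : ℂ) ^ (-s) * hurwitzZeta (↑((r : ℝ) / q)) s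

/-!
For `0 < re s`, `s ≠ 1`, the partial sums `∑_{n ≤ qK, n ≡ r} n⁻ˢ - (qK)^(1-s) / ((1 - s) q)`
telescope into a series of blocks `(qk + r)⁻ˢ - (1/q) ∫_{qk}^{q(k+1)} t⁻ˢ dt`, each of size
`O(k^(-re s - 1))` by the mean value theorem. The series therefore converges locally uniformly to
a holomorphic function; it agrees with `ζ(s; r, q)` for `1 < re s` by the Hurwitz series, hence
near `α` by the identity theorem. Locally uniform convergence carries over to derivatives, and the
`m`-th derivative of the partial sum at `α` is `(-1)^m (Hk m α r q (qK) - Ik m (qK) α / q)`, the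
expression whose limit is `ζ_m(α, r, q)`. So the `m`-th Taylor coefficient of `ζ(s; r, q)` at `α`
is `(-1)^m ζ_m(α, r, q) / m!`, and the Taylor series converges on the largest disc around `α`
avoiding the pole at `1`.
-/

open Topology

open Complex in
theorem iteratedDeriv_const_cpow {c : ℂ} (hc : c ≠ 0) (m : ℕ) :
    iteratedDeriv m (fun s : ℂ => c ^ s) = fun s => log c ^ m * c ^ s := by
  induction m with
  | zero => simp
  | succ m ih =>
    ext s
    rw [iteratedDeriv_succ, ih, pow_succ, mul_assoc, mul_comm (log c)]
    exact ((hasStrictDerivAt_const_cpow (Or.inl hc)).hasDerivAt.const_mul _).deriv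

theorem iteratedDeriv_one_sub_inv (m : ℕ) (s : ℂ) :
    iteratedDeriv m (fun s : ℂ => (1 - s)⁻¹) s = m.factorial * ((1 - s) ^ (m + 1))⁻¹ := by
  have h := congrFun (iteratedDeriv_comp_const_sub m Inv.inv (1 : ℂ)) s
  simp only [iteratedDeriv_eq_iterate, iter_deriv_inv, smul_eq_mul] at h ⊢
  rw [h, ← mul_assoc, ← mul_assoc, ← pow_add, ← two_mul, pow_mul, neg_one_sq, one_pow, one_mul,
    show (-1 - m : ℤ) = -((m + 1 : ℕ) : ℤ) by push_cast; ring, zpow_neg, zpow_natCast]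

theorem iteratedDeriv_sum_natCast_cpow_neg {S : Finset ℕ} (hS : 0 ∉ S) (m : ℕ) (s : ℂ) :
    iteratedDeriv m (fun s : ℂ => ∑ n ∈ S, (n : ℂ) ^ (-s)) s =
      ∑ n ∈ S, (-Complex.log n) ^ m * (n : ℂ) ^ (-s) := by
  have hn : ∀ n ∈ S, (n : ℂ) ≠ 0 := fun n hn => Nat.cast_ne_zero.mpr (ne_of_mem_of_not_mem hn hS)
  rw [iteratedDeriv_fun_sum fun n h =>
    (differentiable_neg.const_cpow (Or.inl (hn n h))).contDiff.contDiffAt]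
  refine sum_congr rfl fun n h => ?_
  rw [iteratedDeriv_comp_neg m (fun z => (n : ℂ) ^ z) s, iteratedDeriv_const_cpow (hn n h),
    smul_eq_mul, neg_pow (Complex.log n)]
  ring

theorem iteratedDeriv_cpow_one_sub_div {x : ℂ} (hx : x ≠ 0) {s : ℂ} (hs : s ≠ 1) (m : ℕ) :
    iteratedDeriv m (fun s => x ^ (1 - s) / (1 - s)) s = ∑ i ∈ range (m + 1),
      m.choose i * (i.factorial * ((1 - s) ^ (i + 1))⁻¹) *
        ((-Complex.log x) ^ (m - i) * x ^ (1 - s)) := by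
  have h1s : 1 - s ≠ 0 := sub_ne_zero.mpr hs.symm
  simp_rw [div_eq_inv_mul]
  rw [iteratedDeriv_fun_mul (f := fun s => (1 - s)⁻¹) (g := fun s => x ^ (1 - s))
    ((contDiffAt_const.sub contDiffAt_id).inv h1s)
    ((differentiable_id.const_sub 1).const_cpow (Or.inl hx)).contDiff.contDiffAt]
  refine sum_congr rfl fun i _ => ?_
  rw [iteratedDeriv_one_sub_inv,
    congrFun (iteratedDeriv_comp_const_sub (m - i) (fun z => x ^ z) 1) s,
    iteratedDeriv_const_cpow hx, smul_eq_mul, neg_pow (Complex.log x)]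
  ring

theorem TendstoLocallyUniformlyOn.iteratedDeriv {ι E : Type*} [NormedAddCommGroup E]
    [NormedSpace ℂ E] [CompleteSpace E] {φ : Filter ι} {F : ι → ℂ → E} {f : ℂ → E} {U : Set ℂ}
    (hf : TendstoLocallyUniformlyOn F f φ U) (hF : ∀ᶠ n in φ, DifferentiableOn ℂ (F n) U)
    (hU : IsOpen U) (m : ℕ) :
    TendstoLocallyUniformlyOn (fun n => iteratedDeriv m (F n)) (iteratedDeriv m f) φ U := by
  induction m with
  | zero => simpa using hf
  | succ m ih =>
    simp only [iteratedDeriv_succ]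
    refine ih.deriv ?_ hU
    filter_upwards [hF] with n hn
    simpa [iteratedDeriv_eq_iterate] using
      ((hn.analyticOnNhd hU).iterated_deriv m).differentiableOn

theorem norm_sub_sub_smul_le_of_hasDerivAt {E : Type*} [NormedAddCommGroup E] [NormedSpace ℝ E]
    {φ f : ℝ → E} {a b c ε : ℝ} (hab : a ≤ b)
    (hφ : ∀ t ∈ Set.Icc a b, HasDerivAt φ (f t) t) (hf : ∀ t ∈ Set.Icc a b, ‖f t - f c‖ ≤ ε) :
    ‖φ b - φ a - (b - a) • f c‖ ≤ ε * (b - a) := by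
  have hψ : ∀ t ∈ Set.Icc a b, HasDerivWithinAt (fun t => φ t - t • f c) (f t - f c)
      (Set.Icc a b) t := fun t ht =>
    ((hφ t ht).sub (by simpa using (hasDerivAt_id t).smul_const (f c))).hasDerivWithinAt
  have := (convex_Icc a b).norm_image_sub_le_of_norm_hasDerivWithin_le hψ hf
    (Set.left_mem_Icc.mpr hab) (Set.right_mem_Icc.mpr hab)
  rw [Real.norm_of_nonneg (sub_nonneg.mpr hab)] at this
  convert this using 2
  rw [sub_smul]
  abel

theorem norm_ofReal_cpow_neg_sub_le {a t c : ℝ} (ha : 0 < a) (ht : a ≤ t) (hc : a ≤ c)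
    {s : ℂ} (hs : 0 < s.re) :
    ‖(t : ℂ) ^ (-s) - (c : ℂ) ^ (-s)‖ ≤ ‖s‖ * a ^ (-s.re - 1) * |t - c| := by
  have hs0 : -s ≠ 0 := neg_ne_zero.mpr fun h => by simp [h] at hs
  have hderiv : ∀ y ∈ Set.Ici a, HasDerivWithinAt (fun y : ℝ => (y : ℂ) ^ (-s))
      (-s * (y : ℂ) ^ (-s - 1)) (Set.Ici a) y := fun y hy =>
    (hasDerivAt_ofReal_cpow_const (ha.trans_le hy).ne' hs0).hasDerivWithinAt
  have hbound : ∀ y ∈ Set.Ici a, ‖-s * (y : ℂ) ^ (-s - 1)‖ ≤ ‖s‖ * a ^ (-s.re - 1) := by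
    intro y hy
    rw [norm_mul, norm_neg, Complex.norm_cpow_eq_rpow_re_of_pos (ha.trans_le hy)]
    gcongr
    exact Real.rpow_le_rpow_of_nonpos ha hy (by simp; linarith)
  simpa [Real.norm_eq_abs] using
    (convex_Ici a).norm_image_sub_le_of_norm_hasDerivWithin_le hderiv hbound hc ht

theorem tendsto_natCast_cpow_of_re_neg {w : ℂ} (hw : w.re < 0) :
    Tendsto (fun N : ℕ => (N : ℂ) ^ w) atTop (𝓝 0) := by
  rw [tendsto_zero_iff_norm_tendsto_zero]
  refine ((tendsto_rpow_neg_atTop (neg_pos.mpr hw)).comp tendsto_natCast_atTop_atTop).congr' ?_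
  filter_upwards [eventually_gt_atTop 0] with N hN
  rw [Function.comp_apply, Complex.norm_natCast_cpow_of_pos hN, neg_neg]

theorem exists_eq_mul_add_of_mod_eq {r q n : ℕ} (hrq : r ≤ q) (hn : 0 < n)
    (h : n % q = r % q) : ∃ k, n = q * k + r := by
  have hdvd : q ∣ n + (q - r) := by
    rw [Nat.dvd_iff_mod_eq_zero, Nat.add_mod, h, ← Nat.add_mod, Nat.add_sub_cancel' hrq,
      Nat.mod_self]
  obtain ⟨_ | j, hj⟩ := hdvd
  · omega
  · exact ⟨j, by rw [Nat.mul_succ] at hj; omega⟩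

theorem sum_filter_mod_eq_eq_sum_range {M : Type*} [AddCommMonoid M] {r q : ℕ} (hr : 0 < r)
    (hrq : r ≤ q) (K : ℕ) (f : ℕ → M) :
    ∑ n ∈ (Icc 1 (q * K)).filter (· % q = r % q), f n = ∑ k ∈ range K, f (q * k + r) := by
  have hq : 0 < q := hr.trans_le hrq
  have himage : (Icc 1 (q * K)).filter (· % q = r % q) = (range K).image (q * · + r) := by
    ext n
    simp only [mem_filter, mem_Icc, mem_image, mem_range]
    constructor
    · rintro ⟨⟨hn, hnK⟩, hmod⟩
      obtain ⟨k, rfl⟩ := exists_eq_mul_add_of_mod_eq hrq hn hmod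
      exact ⟨k, Nat.lt_of_mul_lt_mul_left (a := q) (by omega), rfl⟩
    · rintro ⟨k, hk, rfl⟩
      have : q * (k + 1) ≤ q * K := Nat.mul_le_mul_left q hk
      exact ⟨⟨by omega, by rw [Nat.mul_succ] at this; omega⟩, Nat.mul_add_mod q k r⟩
  rw [himage, sum_image fun a _ b _ h => by
    simpa [hq.ne'] using (Nat.add_right_cancel h : q * a = q * b)]

section PartialZeta

variable {r q : ℕ}

/-- `(qk + r)⁻ˢ - (1/q) ∫_{qk}^{q(k+1)} t⁻ˢ dt`. -/
noncomputable def partialZetaBlock (r q k : ℕ) (s : ℂ) : ℂ :=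
  ((q * k + r : ℕ) : ℂ) ^ (-s) -
    (((q * (k + 1) : ℕ) : ℂ) ^ (1 - s) - ((q * k : ℕ) : ℂ) ^ (1 - s)) / ((1 - s) * q)

theorem sum_range_partialZetaBlock {s : ℂ} (hs : s ≠ 1) (K : ℕ) :
    ∑ k ∈ range K, partialZetaBlock r q k s =
      ∑ k ∈ range K, ((q * k + r : ℕ) : ℂ) ^ (-s) -
        ((q * K : ℕ) : ℂ) ^ (1 - s) / ((1 - s) * q) := by
  simp only [partialZetaBlock]
  rw [sum_sub_distrib, ← sum_div, sum_range_sub (fun k => ((q * k : ℕ) : ℂ) ^ (1 - s)),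
    Nat.mul_zero, Nat.cast_zero, Complex.zero_cpow (sub_ne_zero.mpr hs.symm), sub_zero]

theorem norm_partialZetaBlock_le (hq : 0 < q) (hrq : r ≤ q) {k : ℕ} (hk : 1 ≤ k) {s : ℂ}
    (hs : 0 < s.re) (hs1 : s ≠ 1) :
    ‖partialZetaBlock r q k s‖ ≤ ‖s‖ * q * (k : ℝ) ^ (-s.re - 1) := by
  set A : ℝ := ((q * k : ℕ) : ℝ)
  set c : ℝ := ((q * k + r : ℕ) : ℝ)
  have hqR : (0 : ℝ) < q := by exact_mod_cast hq
  have hkA : (k : ℝ) ≤ A := by simp only [A]; exact_mod_cast Nat.le_mul_of_pos_left k hq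
  have hA : 0 < A := lt_of_lt_of_le (by exact_mod_cast hk) hkA
  have hAc : A ≤ c := by simp only [A, c]; push_cast; linarith [(r.cast_nonneg : (0 : ℝ) ≤ r)]
  have hcA : c ≤ A + q := by
    simp only [A, c]; push_cast; linarith [(Nat.cast_le.mpr hrq : (r : ℝ) ≤ q)]
  have hφ : ∀ t ∈ Set.Icc A (A + q), HasDerivAt (fun t : ℝ => (t : ℂ) ^ (1 - s) / (1 - s))
      ((t : ℂ) ^ (-s)) t := fun t ht => by
    simpa [neg_add_eq_sub] using hasDerivAt_ofReal_cpow_const' (hA.trans_le ht.1).ne'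
      (r := -s) (fun h => hs1 (neg_inj.mp h))
  have hf : ∀ t ∈ Set.Icc A (A + q),
      ‖(t : ℂ) ^ (-s) - (c : ℂ) ^ (-s)‖ ≤ ‖s‖ * A ^ (-s.re - 1) * q :=
    fun t ht => (norm_ofReal_cpow_neg_sub_le hA ht.1 hAc hs).trans <| by
      gcongr; rw [abs_le]; constructor <;> linarith [ht.1, ht.2]
  have key := norm_sub_sub_smul_le_of_hasDerivAt (by linarith : A ≤ A + q) hφ hf
  have hblock : partialZetaBlock r q k s = -(((A + q : ℝ) : ℂ) ^ (1 - s) / (1 - s)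
      - (A : ℂ) ^ (1 - s) / (1 - s) - ((A + q - A : ℝ)) • (c : ℂ) ^ (-s)) / q := by
    have h1s : (1 : ℂ) - s ≠ 0 := sub_ne_zero.mpr hs1.symm
    have hq0 : (q : ℂ) ≠ 0 := by exact_mod_cast hq.ne'
    simp only [partialZetaBlock, A, c, Complex.real_smul]
    push_cast
    field_simp
    ring
  rw [hblock, norm_div, norm_neg, Complex.norm_natCast, div_le_iff₀ hqR]
  calc _ ≤ ‖s‖ * A ^ (-s.re - 1) * q * (A + q - A) := key
    _ ≤ ‖s‖ * (k : ℝ) ^ (-s.re - 1) * q * q := by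
        rw [add_sub_cancel_left]
        gcongr ‖s‖ * ?_ * q * q
        exact Real.rpow_le_rpow_of_nonpos (Nat.cast_pos.mpr hk) hkA (by linarith)
    _ = _ := by ring

theorem isOpen_re_pos_ne_one : IsOpen {s : ℂ | 0 < s.re ∧ s ≠ 1} :=
  (isOpen_lt continuous_const Complex.continuous_re).inter isOpen_ne

theorem differentiableOn_partialZetaBlock (hq : 0 < q) (k : ℕ) :
    DifferentiableOn ℂ (partialZetaBlock r q k) {s | 0 < s.re ∧ s ≠ 1} := by
  rintro s ⟨hs, hs1⟩
  have hs0 : -s ≠ 0 := neg_ne_zero.mpr fun h => by simp [h] at hs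
  have h1s : 1 - s ≠ 0 := sub_ne_zero.mpr hs1.symm
  have hpow : ∀ c : ℂ, DifferentiableAt ℂ (fun s => c ^ (1 - s)) s := fun c =>
    (differentiableAt_id.const_sub 1).const_cpow (Or.inr h1s)
  exact ((differentiableAt_id.neg.const_cpow (Or.inr hs0)).sub (((hpow _).sub (hpow _)).div
    ((differentiableAt_id.const_sub 1).mul_const _)
    (mul_ne_zero h1s (by exact_mod_cast hq.ne')))).differentiableWithinAt

theorem differentiableOn_sum_partialZetaBlock (hq : 0 < q) (K : ℕ) :
    DifferentiableOn ℂ (fun s => ∑ k ∈ range K, partialZetaBlock r q k s)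
      {s | 0 < s.re ∧ s ≠ 1} :=
  DifferentiableOn.fun_sum fun k _ => differentiableOn_partialZetaBlock hq k

theorem tendstoLocallyUniformlyOn_sum_partialZetaBlock (hq : 0 < q) (hrq : r ≤ q) :
    TendstoLocallyUniformlyOn (fun K s => ∑ k ∈ range K, partialZetaBlock r q k s)
      (fun s => ∑' k, partialZetaBlock r q k s) atTop {s | 0 < s.re ∧ s ≠ 1} := by
  rw [tendstoLocallyUniformlyOn_iff_forall_isCompact isOpen_re_pos_ne_one]
  intro S hSΩ hS
  rcases S.eq_empty_or_nonempty with rfl | hne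
  · exact tendstoUniformlyOn_empty
  obtain ⟨z, hzS, hzmin⟩ := hS.exists_isMinOn hne Complex.continuous_re.continuousOn
  obtain ⟨M, hM⟩ := hS.exists_bound_of_continuousOn continuousOn_id
  obtain ⟨C, hC⟩ := hS.exists_bound_of_continuousOn
    ((differentiableOn_partialZetaBlock hq 0).continuousOn.mono hSΩ)
  set σ := z.re
  have hσ : 0 < σ := (hSΩ hzS).1
  set u : ℕ → ℝ := fun k => if k = 0 then C else M * q * (k : ℝ) ^ (-σ - 1)
  have hu : Summable u := by
    refine (summable_nat_add_iff 1).mp <| ((summable_nat_add_iff 1).mpr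
      ((Real.summable_nat_rpow (p := -σ - 1) |>.mpr (by linarith)).mul_left (M * q))).congr
      fun k => ?_
    simp [u]
  refine tendstoUniformlyOn_tsum_nat hu fun k s hs => ?_
  rcases Nat.eq_zero_or_pos k with rfl | hk
  · simpa [u] using hC s hs
  calc ‖partialZetaBlock r q k s‖ ≤ ‖s‖ * q * (k : ℝ) ^ (-s.re - 1) :=
        norm_partialZetaBlock_le hq hrq hk (hSΩ hs).1 (hSΩ hs).2
    _ ≤ M * q * (k : ℝ) ^ (-σ - 1) := by
        have hsM : ‖s‖ ≤ M := hM s hs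
        have hM0 : 0 ≤ M := (norm_nonneg s).trans hsM
        have hσs : σ ≤ s.re := hzmin hs
        have hpow : (k : ℝ) ^ (-s.re - 1) ≤ (k : ℝ) ^ (-σ - 1) :=
          Real.rpow_le_rpow_of_exponent_le (by exact_mod_cast hk) (by linarith)
        gcongr
    _ = u k := by simp [u, hk.ne']

theorem hasSum_partialZeta_of_one_lt_re (hq : 0 < q) (hrq : r ≤ q) {s : ℂ} (hs : 1 < s.re) :
    HasSum (fun k : ℕ => ((q * k + r : ℕ) : ℂ) ^ (-s)) (partialZeta r q s) := by
  have hqR : (0 : ℝ) < q := by exact_mod_cast hq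
  have ha : (r : ℝ) / q ∈ Set.Icc (0 : ℝ) 1 :=
    ⟨by positivity, (div_le_one hqR).mpr (by exact_mod_cast hrq)⟩
  refine ((hasSum_hurwitzZeta_of_one_lt_re ha hs).mul_left ((q : ℂ) ^ (-s))).congr_fun
    fun k => ?_
  have hk : ((q * k + r : ℕ) : ℂ) = ((q : ℝ) : ℂ) * (((k + r / q : ℝ)) : ℂ) := by
    push_cast
    rw [mul_add, mul_div_cancel₀ _ (by exact_mod_cast hq.ne')]
  rw [hk, Complex.mul_cpow_ofReal_nonneg hqR.le (by positivity),
    Complex.cpow_neg (((k + r / q : ℝ)) : ℂ)]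
  push_cast
  ring

theorem tsum_partialZetaBlock_of_one_lt_re (hq : 0 < q) (hrq : r ≤ q) {s : ℂ} (hs : 1 < s.re) :
    ∑' k, partialZetaBlock r q k s = partialZeta r q s := by
  have hs1 : s ≠ 1 := fun h => by simp [h] at hs
  have hpartial : Tendsto (fun K => ∑ k ∈ range K, partialZetaBlock r q k s) atTop
      (𝓝 (partialZeta r q s - 0 / ((1 - s) * q))) := by
    simp_rw [sum_range_partialZetaBlock hs1]
    exact (hasSum_partialZeta_of_one_lt_re hq hrq hs).tendsto_sum_nat.sub
      (((tendsto_natCast_cpow_of_re_neg (by simpa using hs)).comp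
        (tendsto_id.const_mul_atTop' hq)).div_const _)
  rw [zero_div, sub_zero] at hpartial
  exact tendsto_nhds_unique ((tendstoLocallyUniformlyOn_sum_partialZetaBlock hq hrq).tendsto_at
    ⟨by linarith, hs1⟩) hpartial

theorem differentiableAt_partialZeta (hq : 0 < q) {s : ℂ} (hs : s ≠ 1) :
    DifferentiableAt ℂ (partialZeta r q) s :=
  (differentiableAt_id.neg.const_cpow (Or.inl (by exact_mod_cast hq.ne'))).mul
    (differentiableAt_hurwitzZeta _ hs)

theorem tsum_partialZetaBlock_eventuallyEq (hq : 0 < q) (hrq : r ≤ q) {α : ℝ} (hα0 : 0 < α)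
    (hα1 : α < 1) : (fun s => ∑' k, partialZetaBlock r q k s) =ᶠ[𝓝 (α : ℂ)] partialZeta r q := by
  -- a convex open set avoiding `1` that contains `α` and meets the half-plane `1 < re s`
  set V : Set ℂ := {s | 0 < s.re} ∩ {s | s.re - s.im < 1}
  have hVopen : IsOpen V := (isOpen_lt continuous_const Complex.continuous_re).inter
    (isOpen_lt (Complex.continuous_re.sub Complex.continuous_im) continuous_const)
  have hVconv : Convex ℝ V := (convex_halfSpace_re_gt 0).inter
    (convex_halfSpace_lt (Complex.reLm - Complex.imLm).isLinear 1)
  have hVΩ : V ⊆ {s | 0 < s.re ∧ s ≠ 1} := fun s ⟨hs, hs'⟩ =>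
    ⟨hs, by rintro rfl; simp at hs'⟩
  have hL : AnalyticOnNhd ℂ (fun s => ∑' k, partialZetaBlock r q k s) V :=
    (((tendstoLocallyUniformlyOn_sum_partialZetaBlock hq hrq).differentiableOn
      (Eventually.of_forall (differentiableOn_sum_partialZetaBlock hq))
      isOpen_re_pos_ne_one).mono hVΩ).analyticOnNhd hVopen
  have hZ : AnalyticOnNhd ℂ (partialZeta r q) V :=
    (show DifferentiableOn ℂ (partialZeta r q) V from fun s hs =>
      (differentiableAt_partialZeta hq (hVΩ hs).2).differentiableWithinAt).analyticOnNhd hVopen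
  have h2 : (⟨2, 2⟩ : ℂ) ∈ V := ⟨by norm_num, by norm_num⟩
  have heq := hL.eqOn_of_preconnected_of_eventuallyEq hZ hVconv.isPreconnected h2 <|
    Filter.eventually_of_mem ((isOpen_lt continuous_const Complex.continuous_re).mem_nhds
      (show (1 : ℝ) < (⟨2, 2⟩ : ℂ).re by norm_num)) fun s hs =>
      tsum_partialZetaBlock_of_one_lt_re hq hrq hs
  exact Filter.eventually_of_mem (hVopen.mem_nhds ⟨by simpa using hα0, by simpa using hα1⟩) heq

noncomputable def partialZetaApprox (r q N : ℕ) (s : ℂ) : ℂ :=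
  ∑ n ∈ (Icc 1 N).filter (· % q = r % q), (n : ℂ) ^ (-s) - (N : ℂ) ^ (1 - s) / (1 - s) / q

theorem sum_range_partialZetaBlock_eq_partialZetaApprox (hr : 0 < r) (hrq : r ≤ q) {s : ℂ}
    (hs : s ≠ 1) (K : ℕ) :
    ∑ k ∈ range K, partialZetaBlock r q k s = partialZetaApprox r q (q * K) s := by
  rw [sum_range_partialZetaBlock hs, partialZetaApprox,
    sum_filter_mod_eq_eq_sum_range hr hrq K (fun n => (n : ℂ) ^ (-s)), div_div, Nat.cast_mul]

theorem sum_natCast_cpow_neg_eq_Hk (m N : ℕ) (α : ℝ) :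
    ∑ n ∈ (Icc 1 N).filter (· % q = r % q), (-Complex.log n) ^ m * (n : ℂ) ^ (-(α : ℂ)) =
      (-1) ^ m * (Hk m α r q N : ℂ) := by
  rw [Hk, Nat.floor_natCast, ← sum_filter, Complex.ofReal_sum, mul_sum]
  refine sum_congr rfl fun n _ => ?_
  rw [Complex.ofReal_div, Complex.ofReal_pow, Complex.ofReal_cpow n.cast_nonneg,
    Complex.natCast_log, Complex.ofReal_natCast, Complex.cpow_neg, neg_pow, div_eq_mul_inv]
  ring

theorem sum_choose_eq_Ik (m N : ℕ) (α : ℝ) :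
    ∑ i ∈ range (m + 1), m.choose i * (i.factorial * ((1 - (α : ℂ)) ^ (i + 1))⁻¹) *
      ((-Complex.log N) ^ (m - i) * (N : ℂ) ^ (1 - (α : ℂ))) = (-1) ^ m * (Ik m N α : ℂ) := by
  rw [Ik, Complex.ofReal_mul, Complex.ofReal_cpow N.cast_nonneg, Complex.ofReal_sum, mul_sum,
    mul_sum]
  refine sum_congr rfl fun i hi => ?_
  have hi : i ≤ m := Nat.lt_succ_iff.mp (mem_range.mp hi)
  have hsign : (-1 : ℂ) ^ (m - i) = (-1) ^ m * (-1) ^ i := by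
    rw [← pow_add, show m + i = m - i + 2 * i by omega, pow_add, pow_mul, neg_one_sq, one_pow,
      mul_one]
  have hchoose : (m.choose i : ℂ) * i.factorial = m.factorial / (m - i).factorial := by
    rw [Nat.cast_choose ℂ hi, mul_comm, ← mul_div_assoc,
      mul_div_mul_left _ _ (Nat.cast_ne_zero.mpr i.factorial_ne_zero)]
  rw [← mul_assoc (m.choose i : ℂ), hchoose, neg_pow, hsign, ← Complex.natCast_log]
  push_cast
  ring

theorem iteratedDeriv_partialZetaApprox {N : ℕ} (hN : 0 < N) {α : ℝ} (hα : α ≠ 1) (m : ℕ) :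
    iteratedDeriv m (partialZetaApprox r q N) α =
      (-1) ^ m * ((Hk m α r q N - Ik m N α / q : ℝ) : ℂ) := by
  have hS : 0 ∉ (Icc 1 N).filter (· % q = r % q) := by simp
  have hα1 : (α : ℂ) ≠ 1 := by exact_mod_cast hα
  have hsum : ContDiffAt ℂ m
      (fun s : ℂ => ∑ n ∈ (Icc 1 N).filter (· % q = r % q), (n : ℂ) ^ (-s)) α :=
    (Differentiable.fun_sum fun n hn => differentiable_neg.const_cpow
      (Or.inl (Nat.cast_ne_zero.mpr (ne_of_mem_of_not_mem hn hS)))).contDiff.contDiffAt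
  have hmain : ContDiffAt ℂ m (fun s : ℂ => (N : ℂ) ^ (1 - s) / (1 - s) / q) α := by
    refine ((DifferentiableOn.contDiffOn (s := {s | s ≠ 1}) (fun s hs => ?_) isOpen_ne).contDiffAt
      (isOpen_ne.mem_nhds hα1))
    exact ((((differentiableAt_id.const_sub 1).const_cpow (Or.inl (by exact_mod_cast hN.ne'))).div
      (differentiableAt_id.const_sub 1) (sub_ne_zero.mpr (Ne.symm hs))).div_const _)
      |>.differentiableWithinAt
  unfold partialZetaApprox
  rw [iteratedDeriv_fun_sub hsum hmain, iteratedDeriv_div_const,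
    iteratedDeriv_sum_natCast_cpow_neg hS, iteratedDeriv_cpow_one_sub_div
      (by exact_mod_cast hN.ne') hα1, sum_natCast_cpow_neg_eq_Hk, sum_choose_eq_Ik]
  push_cast
  ring

theorem iteratedDeriv_partialZeta_eq (hr : 0 < r) (hrq : r ≤ q) {α : ℝ} (hα0 : 0 < α)
    (hα1 : α < 1) (m : ℕ) {Z : ℝ}
    (hZ : Tendsto (fun x : ℝ => Hk m α r q x - Ik m x α / q) atTop (𝓝 Z)) :
    iteratedDeriv m (partialZeta r q) α = (-1) ^ m * Z := by
  have hq : 0 < q := hr.trans_le hrq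
  have hαΩ : (α : ℂ) ∈ {s : ℂ | 0 < s.re ∧ s ≠ 1} :=
    ⟨by simpa using hα0, by exact_mod_cast hα1.ne⟩
  have hderiv := ((tendstoLocallyUniformlyOn_sum_partialZetaBlock hq hrq).iteratedDeriv
    (Eventually.of_forall (differentiableOn_sum_partialZetaBlock hq)) isOpen_re_pos_ne_one
    m).tendsto_at hαΩ
  have hqK : Tendsto (fun K : ℕ => q * K) atTop atTop := tendsto_id.const_mul_atTop' hq
  have happrox : ∀ᶠ K : ℕ in atTop, iteratedDeriv m
      (fun s => ∑ k ∈ range K, partialZetaBlock r q k s) α =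
      (-1) ^ m * ((Hk m α r q (q * K : ℕ) - Ik m (q * K : ℕ) α / q : ℝ) : ℂ) := by
    filter_upwards [hqK.eventually_gt_atTop 0] with K hK
    rw [← iteratedDeriv_partialZetaApprox hK hα1.ne m]
    refine Filter.EventuallyEq.iteratedDeriv_eq m <| Filter.eventually_of_mem
      (isOpen_ne.mem_nhds hαΩ.2) fun s hs => ?_
    exact sum_range_partialZetaBlock_eq_partialZetaApprox hr hrq hs K
  have hlim := ((Complex.continuous_ofReal.tendsto Z).comp
    (hZ.comp (tendsto_natCast_atTop_atTop.comp hqK))).const_mul ((-1 : ℂ) ^ m)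
  rw [← (tsum_partialZetaBlock_eventuallyEq hq hrq hα0 hα1).iteratedDeriv_eq m]
  exact tendsto_nhds_unique hderiv (hlim.congr' (happrox.mono fun K hK => hK.symm))

end PartialZeta

/-- Taylor expansion of `ζ(s; r, q)` at `s = α`:
`ζ(s;r,q) = ∑_{m≥0} ((-1)^m / m!) ζ_m(α,r,q) (s-α)^m` for `|s-α| < |α-1|`. -/
theorem stmt8 (α : ℝ) (hα : α ∈ Set.Ioo (0 : ℝ) 1) (r q : ℕ)
    (hr : 0 < r) (hrq : r ≤ q)
    (Z : ℕ → ℝ)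
    (hZ : ∀ m : ℕ,
      Tendsto (fun x : ℝ => Hk m α r q x - Ik m x α / q) atTop (nhds (Z m)))
    (s : ℂ) (hs : ‖s - (α : ℂ)‖ < |α - 1|) :
    HasSum (fun m : ℕ => ((-1 : ℂ) ^ m / (Nat.factorial m : ℂ)) * (Z m : ℂ) *
      (s - (α : ℂ)) ^ m) (partialZeta r q s) := by
  obtain ⟨hα0, hα1⟩ := hα
  have hball : DifferentiableOn ℂ (partialZeta r q) (Metric.ball (α : ℂ) |α - 1|) := by
    refine fun z hz => (differentiableAt_partialZeta (hr.trans_le hrq) ?_).differentiableWithinAt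
    rintro rfl
    simp [Metric.mem_ball, dist_eq_norm, ← Complex.ofReal_one, ← Complex.ofReal_sub,
      abs_sub_comm] at hz
  refine (Complex.hasSum_taylorSeries_on_ball hball (mem_ball_iff_norm.mpr hs)).congr_fun
    fun m => ?_
  rw [iteratedDeriv_partialZeta_eq hr hrq hα0 hα1 m (hZ m), smul_eq_mul, smul_eq_mul]
  ring
end

section
/- For the principal Dirichlet character χ₀ modulo q, the limit lim_{x→∞} ( ∑_{n ≤ x, gcd(n, rad(q)) = 1} (log n)^k / n − ∏_{p | rad(q)} (1 − 1/p) · (log x)^{k+1}/(k+1) ) exists, and equals the k-th Laurent coefficient constant γ_k(χ₀) = ∑_{1 ≤ r ≤ q, gcd(r,q)=1} γ_k(r,q). -/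
/-! An integer `n` is coprime to `rad q` iff it is coprime to `q`, and then it lies in exactly one
reduced residue class `r ∈ [1, q]`. Summing the `φ(q)` class sums therefore gives the sum over `n`
coprime to `rad q`, while the main terms add up to `φ(q)/q · (log x)^{k+1}/(k+1)` with
`φ(q)/q = ∏_{p ∣ q} (1 - 1/p)`; the limit of a finite sum is the sum of the limits. -/

open Filter Real Finset

/-- The radical of `q`: the product of the distinct prime divisors of `q`. -/
def radical (q : ℕ) : ℕ := ∏ p ∈ q.primeFactors, p

lemma primeFactors_radical (q : ℕ) : (radical q).primeFactors = q.primeFactors :=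
  Nat.primeFactors_prod fun _ hp => Nat.prime_of_mem_primeFactors hp

lemma radical_ne_zero (q : ℕ) : radical q ≠ 0 :=
  prod_ne_zero_iff.mpr fun _ hp => (Nat.prime_of_mem_primeFactors hp).ne_zero

lemma coprime_radical_iff {n q : ℕ} (hn : n ≠ 0) (hq : q ≠ 0) :
    n.Coprime (radical q) ↔ n.Coprime q := by
  rw [← Nat.disjoint_primeFactors hn (radical_ne_zero q), ← Nat.disjoint_primeFactors hn hq,
    primeFactors_radical]

lemma prod_one_sub_inv_primeFactors {q : ℕ} (hq : q ≠ 0) :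
    ∏ p ∈ q.primeFactors, (1 - 1 / (p : ℝ)) = q.totient / q := by
  have h := congrArg (fun x : ℚ => (x : ℝ)) (Nat.totient_eq_mul_prod_factors q)
  push_cast at h
  rw [h, mul_div_cancel_left₀ _ (Nat.cast_ne_zero.mpr hq)]
  simp only [one_div]

lemma sum_Icc_one_mod {M : Type*} [AddCommMonoid M] {q : ℕ} (hq : 0 < q) (f : ℕ → M) :
    ∑ r ∈ Icc 1 q, f (r % q) = ∑ s ∈ range q, f s := by
  obtain ⟨m, rfl⟩ := Nat.exists_eq_add_one_of_ne_zero hq.ne'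
  rw [← Ico_add_one_right_eq_Icc, sum_Ico_eq_sum_range, Nat.add_sub_cancel,
    sum_range_succ (fun k => f ((1 + k) % (m + 1))), sum_range_succ' f, add_comm 1 m, Nat.mod_self]
  congr 1
  exact sum_congr rfl fun r hr => by rw [add_comm, Nat.mod_eq_of_lt (by simpa using hr)]

lemma sum_coprime_Icc_one_mod {M : Type*} [AddCommMonoid M] {q : ℕ} (hq : 0 < q) (f : ℕ → M) :
    ∑ r ∈ (Icc 1 q).filter (fun r => r.gcd q = 1), f (r % q) =
      ∑ s ∈ (range q).filter (fun s => s.Coprime q), f s := by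
  rw [sum_filter, sum_filter, ← sum_Icc_one_mod hq]
  exact sum_congr rfl fun r _ => by
    simp only [← Nat.coprime_iff_gcd_eq_one, ZMod.coprime_mod_iff_coprime]

lemma card_coprime_Icc_one {q : ℕ} (hq : 0 < q) :
    #((Icc 1 q).filter (fun r => r.gcd q = 1)) = q.totient := by
  rw [card_eq_sum_ones, sum_coprime_Icc_one_mod hq fun _ => 1, ← card_eq_sum_ones, Nat.totient]
  simp_rw [Nat.coprime_comm]

lemma sum_coprime_Icc_one_ite_mod_eq {M : Type*} [AddCommMonoid M] {q : ℕ} (hq : 0 < q)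
    (n : ℕ) (a : M) :
    ∑ r ∈ (Icc 1 q).filter (fun r => r.gcd q = 1), (if n % q = r % q then a else 0) =
      if n.Coprime q then a else 0 := by
  rw [sum_coprime_Icc_one_mod hq (fun s => if n % q = s then a else 0), sum_ite_eq]
  simp [Nat.mod_lt n hq, ZMod.coprime_mod_iff_coprime]

/-- For the principal character mod `q`, the limit
`lim_{x→∞} (∑_{n ≤ x, (n, rad q) = 1} (log n)^k / n − ∏_{p | rad q}(1-1/p) · (log x)^{k+1}/(k+1))`
exists and equals `γ_k(χ₀) = ∑_{1 ≤ r ≤ q, (r,q)=1} γ_k(r,q)`. -/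
theorem stmt12 (q : ℕ) (hq : 0 < q) (k : ℕ)
    (G : ℕ → ℝ)
    (hG : ∀ r ∈ Finset.Icc 1 q, Nat.gcd r q = 1 →
      Tendsto (fun x : ℝ =>
          (∑ n ∈ Finset.Icc 1 ⌊x⌋₊, if n % q = r % q then Real.log n ^ k / (n : ℝ) else 0) -
            Real.log x ^ (k + 1) / (q * (k + 1)))
        atTop (nhds (G r))) :
    Tendsto (fun x : ℝ =>
        (∑ n ∈ Finset.Icc 1 ⌊x⌋₊,
          if Nat.gcd n (radical q) = 1 then Real.log n ^ k / (n : ℝ) else 0) -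
          (∏ p ∈ q.primeFactors, (1 - 1 / (p : ℝ))) * Real.log x ^ (k + 1) / (k + 1))
      atTop
      (nhds (∑ r ∈ (Finset.Icc 1 q).filter (fun r => Nat.gcd r q = 1), G r)) := by
  refine (tendsto_finsetSum _ fun r hr => hG r (mem_filter.1 hr).1 (mem_filter.1 hr).2).congr
    fun x => ?_
  rw [sum_sub_distrib, sum_comm, sum_const, card_coprime_Icc_one hq,
    prod_one_sub_inv_primeFactors hq.ne', nsmul_eq_mul]
  congr 1
  · refine sum_congr rfl fun n hn => ?_
    simp only [sum_coprime_Icc_one_ite_mod_eq hq, ← Nat.coprime_iff_gcd_eq_one,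
      coprime_radical_iff (Nat.one_le_iff_ne_zero.1 (mem_Icc.1 hn).1) hq.ne']
  · field_simp
end

section
/- Let P_r be the product of the first r primes. Then γ_0(𝒫_r) := lim_{x→∞} ( ∑_{n ≤ x, gcd(n,P_r)=1} 1/n − δ_r log x ) with δ_r = ∏_{i=1}^{r} (1 − 1/p_i) exists, and γ_0(𝒫_r) = lim_{s→1⁺} ( ζ(s) ∏_{i=1}^{r} (1 − p_i^{−s}) − δ_r/(s−1) ). -/
open Filter Real Finset

/-- The `i`-th prime (0-indexed). -/
noncomputable def nthPrime (i : ℕ) : ℕ := Nat.nth Nat.Prime i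

open Topology

/-!
Inclusion–exclusion over the subsets `T` of the set of primes, with `d_T = ∏_{p ∈ T} p`, writes
the coprime harmonic sum up to `x` as `∑_T (-1)^|T| d_T⁻¹ H(⌊x⌋ / d_T)`, the density `δ` as
`∑_T (-1)^|T| d_T⁻¹`, and `ζ(s) ∏_p (1 - p^{-s})` as `∑_T (-1)^|T| ζ(s) d_T^{-s}`. Both limits thus
reduce, term by term, to a single divisor `d`: `H(⌊x⌋ / d) - log x → γ - log d` follows from
`H(n) - log n → γ`, and `ζ(s) d^{-s} - d⁻¹ / (s - 1) → (γ - log d) / d` follows from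
`ζ(s) - 1 / (s - 1) → γ` together with the derivative `-d⁻¹ log d` of `d^{-s}` at `s = 1`.
The common limit is `∑_T (-1)^|T| (γ - log d_T) / d_T`.
-/

theorem Finset.prod_one_sub_eq_sum_powerset {ι R : Type*} [CommRing R] [DecidableEq ι]
    (s : Finset ι) (f : ι → R) :
    ∏ i ∈ s, (1 - f i) = ∑ t ∈ s.powerset, (-1) ^ #t * ∏ i ∈ t, f i := by
  simp [prod_sub]

theorem Complex.prod_natCast_cpow {ι : Type*} (s : Finset ι) (f : ι → ℕ) (w : ℂ) :
    ∏ i ∈ s, (f i : ℂ) ^ w = ((∏ i ∈ s, f i : ℕ) : ℂ) ^ w := by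
  classical
  induction s using Finset.cons_induction with
  | empty => simp
  | cons a s ha ih => rw [prod_cons, prod_cons, ih, Nat.cast_mul, natCast_mul_natCast_cpow]

theorem sum_Icc_filter_dvd_inv {d : ℕ} (hd : 0 < d) (N : ℕ) :
    ∑ n ∈ Icc 1 N with d ∣ n, (n : ℝ)⁻¹ = (d : ℝ)⁻¹ * harmonic (N / d) := by
  have hmultiples : {n ∈ Icc 1 N | d ∣ n} = (Icc 1 (N / d)).image (d * ·) := by
    ext n
    simp only [mem_filter, mem_Icc, mem_image]
    constructor
    · rintro ⟨⟨hn1, hnN⟩, k, rfl⟩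
      exact ⟨k, ⟨Nat.pos_of_mul_pos_left hn1, (Nat.le_div_iff_mul_le hd).2 (by linarith)⟩, rfl⟩
    · rintro ⟨k, ⟨hk1, hkN⟩, rfl⟩
      exact ⟨⟨Nat.mul_pos hd hk1, by nlinarith [Nat.div_mul_le_self N d]⟩, dvd_mul_right d k⟩
  rw [hmultiples, sum_image fun a _ b _ h => Nat.eq_of_mul_eq_mul_left hd h, harmonic_eq_sum_Icc]
  push_cast
  rw [mul_sum]
  simp_rw [mul_inv]

theorem tendsto_harmonic_floor_div_sub_log {d : ℕ} (hd : 0 < d) :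
    Tendsto (fun x : ℝ => (harmonic (⌊x⌋₊ / d) : ℝ) - log x) atTop
      (𝓝 (eulerMascheroniConstant - log d)) := by
  have hd' : (0 : ℝ) < d := by exact_mod_cast hd
  have hdiv : Tendsto (fun x : ℝ => x / d) atTop atTop := tendsto_id.atTop_div_const hd'
  have hharmonic := tendsto_harmonic_sub_log.comp (tendsto_nat_floor_atTop.comp hdiv)
  have hratio : Tendsto (fun x : ℝ => log (⌊x / d⌋₊ / (x / d))) atTop (𝓝 0) := by
    simpa [Function.comp_def] using
      (continuousAt_log one_ne_zero).tendsto.comp (tendsto_nat_floor_div_atTop.comp hdiv)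
  rw [← add_zero eulerMascheroniConstant]
  refine ((hharmonic.add hratio).sub_const (log d)).congr' ?_
  filter_upwards [eventually_ge_atTop (d : ℝ)] with x hx
  have hfloor : (0 : ℝ) < ⌊x / d⌋₊ := by
    exact_mod_cast Nat.floor_pos.2 ((one_le_div hd').2 hx)
  have hx0 : (0 : ℝ) < x / d := div_pos (hd'.trans_le hx) hd'
  simp only [Function.comp_apply]
  rw [← Nat.floor_div_natCast, log_div hfloor.ne' hx0.ne', log_div (by linarith) hd'.ne']
  ring

theorem tendsto_riemannZeta_mul_cpow_neg_sub {d : ℕ} (hd : 0 < d) :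
    Tendsto (fun z : ℂ => riemannZeta z * (d : ℂ) ^ (-z) - (d : ℂ)⁻¹ / (z - 1)) (𝓝[≠] 1)
      (𝓝 (((eulerMascheroniConstant - log d) / d : ℝ) : ℂ)) := by
  have hd0 : (d : ℂ) ≠ 0 := by exact_mod_cast hd.ne'
  have hderiv : HasDerivAt (fun z : ℂ => (d : ℂ) ^ (-z)) ((d : ℂ)⁻¹ * Complex.log d * -1) 1 := by
    simpa [Complex.cpow_neg_one] using ((hasDerivAt_id (1 : ℂ)).neg).const_cpow (Or.inl hd0)
  have hcont : Tendsto (fun z : ℂ => (d : ℂ) ^ (-z)) (𝓝[≠] 1) (𝓝 (d : ℂ)⁻¹) := by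
    simpa [Complex.cpow_neg_one] using hderiv.continuousAt.tendsto.mono_left nhdsWithin_le_nhds
  -- `ζ(z) d^{-z} - d⁻¹/(z-1) = d^{-z} (ζ(z) - 1/(z-1)) + (d^{-z} - d⁻¹)/(z-1)`
  have hsum :=
    (hcont.mul tendsto_riemannZeta_sub_one_div).add (hasDerivAt_iff_tendsto_slope.1 hderiv)
  convert hsum.congr' ?_ using 2
  · rw [← Complex.natCast_log]
    push_cast
    ring
  · filter_upwards [self_mem_nhdsWithin] with z hz
    have hz1 : z - 1 ≠ 0 := sub_ne_zero.2 hz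
    simp only [slope_def_field, Complex.cpow_neg_one]
    field_simp
    ring

section PrimeSet

variable {S : Finset ℕ}

theorem coprime_prod_indicator_eq_sum_powerset {R : Type*} [CommRing R]
    (hS : ∀ p ∈ S, p.Prime) (n : ℕ) :
    (if n.Coprime (∏ p ∈ S, p) then (1 : R) else 0) =
      ∑ T ∈ S.powerset, (-1) ^ #T * if ∏ p ∈ T, p ∣ n then 1 else 0 := by
  have hcoprime : n.Coprime (∏ p ∈ S, p) ↔ ∀ p ∈ S, ¬p ∣ n := by
    rw [Nat.coprime_prod_right_iff]
    exact forall₂_congr fun p hp => Nat.coprime_comm.trans (hS p hp).coprime_iff_not_dvd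
  have hdvd : ∀ T ∈ S.powerset, ∏ p ∈ T, p ∣ n ↔ ∀ p ∈ T, p ∣ n := fun T hT =>
    ⟨fun h p hp => (dvd_prod_of_mem _ hp).trans h,
      prod_primes_dvd n fun p hp => (hS p (mem_powerset.1 hT hp)).prime⟩
  calc (if n.Coprime (∏ p ∈ S, p) then (1 : R) else 0)
      = ∏ p ∈ S, (1 - if p ∣ n then 1 else 0) := by
        simp only [hcoprime]
        rw [← prod_boole]
        exact prod_congr rfl fun p _ => by split_ifs <;> simp
    _ = _ := by
        rw [prod_one_sub_eq_sum_powerset]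
        exact sum_congr rfl fun T hT => by simp only [prod_boole, hdvd T hT]

theorem sum_coprime_prod_inv_eq (hS : ∀ p ∈ S, p.Prime) (N : ℕ) :
    ∑ n ∈ Icc 1 N, (if n.Coprime (∏ p ∈ S, p) then (n : ℝ)⁻¹ else 0) =
      ∑ T ∈ S.powerset, (-1) ^ #T * ((∏ p ∈ T, p : ℕ) : ℝ)⁻¹ * harmonic (N / ∏ p ∈ T, p) := by
  calc _ = ∑ n ∈ Icc 1 N, ∑ T ∈ S.powerset,
        (-1) ^ #T * if ∏ p ∈ T, p ∣ n then (n : ℝ)⁻¹ else 0 := by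
        refine sum_congr rfl fun n _ => ?_
        rw [← boole_mul, coprime_prod_indicator_eq_sum_powerset hS, sum_mul]
        simp_rw [mul_assoc, boole_mul]
    _ = _ := by
        rw [sum_comm]
        refine sum_congr rfl fun T hT => ?_
        have hpos : 0 < ∏ p ∈ T, p :=
          prod_pos fun p hp => (hS p (mem_powerset.1 hT hp)).pos
        rw [← mul_sum, ← sum_filter, sum_Icc_filter_dvd_inv hpos, mul_assoc]

theorem prod_one_sub_inv_eq_sum_powerset :
    ∏ p ∈ S, (1 - 1 / (p : ℝ)) = ∑ T ∈ S.powerset, (-1) ^ #T * ((∏ p ∈ T, p : ℕ) : ℝ)⁻¹ := by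
  simp_rw [one_div, prod_one_sub_eq_sum_powerset, Nat.cast_prod, prod_inv_distrib]

theorem prod_one_sub_cpow_neg_eq_sum_powerset (z : ℂ) :
    ∏ p ∈ S, (1 - (p : ℂ) ^ (-z)) =
      ∑ T ∈ S.powerset, (-1) ^ #T * ((∏ p ∈ T, p : ℕ) : ℂ) ^ (-z) := by
  simp_rw [prod_one_sub_eq_sum_powerset, Complex.prod_natCast_cpow]

end PrimeSet

noncomputable def coprimeEulerConstant (S : Finset ℕ) : ℝ :=
  ∑ T ∈ S.powerset, (-1) ^ #T *
    ((eulerMascheroniConstant - log (∏ p ∈ T, p : ℕ)) / (∏ p ∈ T, p : ℕ))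

theorem tendsto_sum_coprime_inv_sub_mul_log {S : Finset ℕ} (hS : ∀ p ∈ S, p.Prime) :
    Tendsto (fun x : ℝ =>
        (∑ n ∈ Icc 1 ⌊x⌋₊, if n.gcd (∏ p ∈ S, p) = 1 then 1 / (n : ℝ) else 0) -
          (∏ p ∈ S, (1 - 1 / (p : ℝ))) * log x)
      atTop (𝓝 (coprimeEulerConstant S)) := by
  have hd : ∀ T ∈ S.powerset, 0 < ∏ p ∈ T, p := fun T hT =>
    prod_pos fun p hp => (hS p (mem_powerset.1 hT hp)).pos
  have hlim := tendsto_finsetSum S.powerset fun T hT =>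
    (tendsto_harmonic_floor_div_sub_log (hd T hT)).const_mul ((-1) ^ #T * ((∏ p ∈ T, p : ℕ) : ℝ)⁻¹)
  convert hlim using 2 with x
  · rw [prod_one_sub_inv_eq_sum_powerset]
    simp only [one_div, ← Nat.coprime_iff_gcd_eq_one]
    rw [sum_coprime_prod_inv_eq hS, sum_mul, ← sum_sub_distrib]
    exact sum_congr rfl fun T _ => by ring
  · exact sum_congr rfl fun T _ => by ring

theorem tendsto_riemannZeta_mul_prod_one_sub_cpow_neg_sub {S : Finset ℕ} (hS : ∀ p ∈ S, 0 < p) :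
    Tendsto (fun z : ℂ =>
        riemannZeta z * ∏ p ∈ S, (1 - (p : ℂ) ^ (-z)) -
          ((∏ p ∈ S, (1 - 1 / (p : ℝ)) : ℝ) : ℂ) / (z - 1))
      (𝓝[≠] 1) (𝓝 (coprimeEulerConstant S : ℂ)) := by
  have hd : ∀ T ∈ S.powerset, 0 < ∏ p ∈ T, p := fun T hT =>
    prod_pos fun p hp => hS p (mem_powerset.1 hT hp)
  have hlim := tendsto_finsetSum S.powerset fun T hT =>
    (tendsto_riemannZeta_mul_cpow_neg_sub (hd T hT)).const_mul ((-1) ^ #T : ℂ)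
  convert hlim using 2 with z
  · rw [prod_one_sub_cpow_neg_eq_sum_powerset, prod_one_sub_inv_eq_sum_powerset, mul_sum]
    push_cast
    rw [sum_div, ← sum_sub_distrib]
    exact sum_congr rfl fun T _ => by ring
  · simp [coprimeEulerConstant]

/-- `γ_0(𝒫_r)` exists as a limit and equals
`lim_{s→1⁺} ( ζ(s) ∏_{i=1}^{r} (1 − p_i^{-s}) − δ_r/(s−1) )`. -/
theorem stmt14 (r : ℕ) :
    ∃ L : ℝ,
      Tendsto (fun x : ℝ =>
          (∑ n ∈ Finset.Icc 1 ⌊x⌋₊,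
            if Nat.gcd n (∏ i ∈ Finset.range r, nthPrime i) = 1 then 1 / (n : ℝ) else 0) -
            (∏ i ∈ Finset.range r, (1 - 1 / (nthPrime i : ℝ))) * Real.log x)
        atTop (nhds L) ∧
      Tendsto (fun s : ℝ =>
          riemannZeta s * ∏ i ∈ Finset.range r, (1 - (nthPrime i : ℂ) ^ (-(s : ℂ))) -
            ((∏ i ∈ Finset.range r, (1 - 1 / (nthPrime i : ℝ))) : ℝ) / ((s : ℂ) - 1))
        (nhdsWithin 1 (Set.Ioi 1)) (nhds (L : ℂ)) := by
  have hinj : Set.InjOn nthPrime (range r) := (Nat.nth_injective Nat.infinite_setOfPred_prime).injOn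
  have hprime : ∀ p ∈ (range r).image nthPrime, p.Prime := by
    simp only [mem_image]
    rintro _ ⟨i, -, rfl⟩
    exact Nat.prime_nth_prime i
  have hofReal : Tendsto ((↑) : ℝ → ℂ) (𝓝[>] 1) (𝓝[≠] 1) :=
    Complex.continuous_ofReal.continuousWithinAt.tendsto_nhdsWithin fun x hx => by
      simpa using (Set.mem_Ioi.1 hx).ne'
  have hsum := tendsto_sum_coprime_inv_sub_mul_log hprime
  have hzeta :=
    (tendsto_riemannZeta_mul_prod_one_sub_cpow_neg_sub fun p hp => (hprime p hp).pos).comp hofReal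
  simp only [prod_image hinj] at hsum hzeta
  exact ⟨_, hsum, hzeta⟩
end

section
/- For any squarefree positive integer n = P_r (a product of distinct primes p_1 < ⋯ < p_r) and k ∈ ℕ: ∑_{d | P_r} μ(d)(log d)^k / d = ∏_{i=1}^{r}(1 − 1/p_i) · ∑_{S ⊆ {p_1,…,p_r}} L_k(P_S)/∏_{p ∈ S}(p−1), where L_k(n) = ∑_{d | n} μ(d)(log d)^k and P_S = ∏_{p ∈ S} p. -/
/-!
Both sides are sums over the divisors `P_T` (`T ⊆ P`) of the squarefree `P_r`. Expanding
`L_k(P_S) = ∑_{T ⊆ S} μ(P_T) (log P_T)^k` and exchanging the sums, the coefficient of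
`μ(P_T) (log P_T)^k` on the right is
`∏_{p ∈ P} (1 - 1/p) · ∑_{T ⊆ S ⊆ P} ∏_{p ∈ S} 1/(p - 1)
  = ∏_{p ∈ T} (1 - 1/p)/(p - 1) · ∏_{p ∈ P \ T} (1 - 1/p)(1 + 1/(p - 1))`,
where every factor over `T` is `1/p` and every factor over `P \ T` is `1`.
-/

open Real Finset ArithmeticFunction

/-- `L_k(n) = ∑_{d | n} μ(d) (log d)^k`. -/
noncomputable def Lk (k n : ℕ) : ℝ :=
  ∑ d ∈ n.divisors, (ArithmeticFunction.moebius d : ℝ) * Real.log d ^ k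

theorem Nat.sum_divisors_prod_primes_eq_sum_powerset {M : Type*} [AddCommMonoid M]
    {P : Finset ℕ} (hP : ∀ p ∈ P, p.Prime) (F : ℕ → M) :
    ∑ d ∈ (∏ p ∈ P, p).divisors, F d = ∑ T ∈ P.powerset, F (∏ p ∈ T, p) := by
  have hsq : Squarefree (∏ p ∈ P, p) :=
    squarefree_prod_of_pairwise_isCoprime
      (fun p hp q hq hpq =>
        Nat.coprime_iff_isRelPrime.1 ((Nat.coprime_primes (hP p hp) (hP q hq)).2 hpq))
      fun p hp => (hP p hp).squarefree
  rw [← Nat.divisors_filter_squarefree_of_squarefree hsq,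
    Nat.sum_divisors_filter_squarefree hsq.ne_zero, factors_eq, List.toFinset_coe,
    Nat.toFinset_factors, Nat.primeFactors_prod hP]
  exact sum_congr rfl fun T _ => congrArg F T.prod_val

namespace Finset

variable {ι : Type*} [DecidableEq ι]

theorem sum_powerset_sum_powerset_comm {M : Type*} [AddCommMonoid M] (P : Finset ι)
    (h : Finset ι → Finset ι → M) :
    ∑ S ∈ P.powerset, ∑ T ∈ S.powerset, h T S = ∑ T ∈ P.powerset, ∑ S ∈ Icc T P, h T S :=
  sum_comm' fun S T => by
    simp only [mem_powerset, mem_Icc]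
    exact ⟨fun ⟨hSP, hTS⟩ => ⟨⟨hTS, hSP⟩, hTS.trans hSP⟩, fun ⟨⟨hTS, hSP⟩, _⟩ => ⟨hSP, hTS⟩⟩

theorem sum_Icc_prod_eq_prod_mul_prod_one_add {R : Type*} [CommSemiring R] {T P : Finset ι}
    (hTP : T ⊆ P) (g : ι → R) :
    ∑ S ∈ Icc T P, ∏ i ∈ S, g i = (∏ i ∈ T, g i) * ∏ i ∈ P \ T, (1 + g i) := by
  have hdisj : ∀ U ∈ (P \ T).powerset, Disjoint T U := fun U hU =>
    disjoint_of_subset_right (mem_powerset.1 hU) disjoint_sdiff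
  rw [Icc_eq_image_powerset hTP, sum_image, prod_one_add, mul_sum]
  · exact sum_congr rfl fun U hU => prod_union (hdisj U hU)
  · intro U hU V hV hUV
    rw [← union_sdiff_cancel_left (hdisj U hU), ← union_sdiff_cancel_left (hdisj V hV)]
    exact congrArg (· \ T) hUV

theorem prod_one_sub_one_div_mul_sum_Icc_one_div_prod_sub_one {K : Type*} [Field K]
    {T P : Finset ι} (hTP : T ⊆ P) {x : ι → K} (hx0 : ∀ i ∈ P, x i ≠ 0)
    (hx1 : ∀ i ∈ P, x i ≠ 1) :
    (∏ i ∈ P, (1 - 1 / x i)) * ∑ S ∈ Icc T P, 1 / ∏ i ∈ S, (x i - 1) = 1 / ∏ i ∈ T, x i := by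
  have hsub : ∀ i ∈ P, x i - 1 ≠ 0 := fun i hi => sub_ne_zero.2 (hx1 i hi)
  have hT : ∏ i ∈ T, (1 - 1 / x i) * (x i - 1)⁻¹ = ∏ i ∈ T, (x i)⁻¹ :=
    prod_congr rfl fun i hi => by
      have := hx0 i (hTP hi); have := hsub i (hTP hi); field_simp
  have hPT : ∏ i ∈ P \ T, (1 - 1 / x i) * (1 + (x i - 1)⁻¹) = 1 :=
    prod_eq_one fun i hi => by
      have := hx0 i (mem_sdiff.1 hi).1; have := hsub i (mem_sdiff.1 hi).1; field_simp; ring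
  calc (∏ i ∈ P, (1 - 1 / x i)) * ∑ S ∈ Icc T P, 1 / ∏ i ∈ S, (x i - 1)
      = (∏ i ∈ P \ T, (1 - 1 / x i)) * (∏ i ∈ T, (1 - 1 / x i)) *
          ((∏ i ∈ T, (x i - 1)⁻¹) * ∏ i ∈ P \ T, (1 + (x i - 1)⁻¹)) := by
        simp_rw [prod_sdiff hTP, one_div (∏ i ∈ _, _), ← prod_inv_distrib,
          sum_Icc_prod_eq_prod_mul_prod_one_add hTP]
    _ = (∏ i ∈ T, (1 - 1 / x i) * (x i - 1)⁻¹) *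
          ∏ i ∈ P \ T, (1 - 1 / x i) * (1 + (x i - 1)⁻¹) := by
        rw [prod_mul_distrib, prod_mul_distrib]; ring
    _ = 1 / ∏ i ∈ T, x i := by rw [hT, hPT, mul_one, prod_inv_distrib, one_div]

end Finset

/-- For a squarefree `P_r = ∏_{p ∈ P} p` (product of distinct primes):
`∑_{d | P_r} μ(d)(log d)^k / d = ∏_{p}(1 − 1/p) · ∑_{S ⊆ P} L_k(P_S)/∏_{p ∈ S}(p−1)`. -/
theorem stmt16 (P : Finset ℕ) (hP : ∀ p ∈ P, p.Prime) (k : ℕ) :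
    ∑ d ∈ (∏ p ∈ P, p).divisors,
        (ArithmeticFunction.moebius d : ℝ) * Real.log d ^ k / d =
      (∏ p ∈ P, (1 - 1 / (p : ℝ))) *
        ∑ S ∈ P.powerset, Lk k (∏ p ∈ S, p) / ∏ p ∈ S, ((p : ℝ) - 1) := by
  have hLk (S) (hS : S ∈ P.powerset) : Lk k (∏ p ∈ S, p) / ∏ p ∈ S, ((p : ℝ) - 1) =
      ∑ T ∈ S.powerset, (moebius (∏ p ∈ T, p) : ℝ) * Real.log (∏ p ∈ T, p : ℕ) ^ k /
        ∏ p ∈ S, ((p : ℝ) - 1) := by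
    rw [Lk, Nat.sum_divisors_prod_primes_eq_sum_powerset
      (fun p hp => hP p (mem_powerset.1 hS hp)), sum_div]
  rw [Nat.sum_divisors_prod_primes_eq_sum_powerset hP, sum_congr rfl hLk,
    sum_powerset_sum_powerset_comm, mul_sum]
  refine sum_congr rfl fun T hT => ?_
  have hweight := prod_one_sub_one_div_mul_sum_Icc_one_div_prod_sub_one (mem_powerset.1 hT)
    (x := fun p : ℕ => (p : ℝ)) (fun p hp => by exact_mod_cast (hP p hp).ne_zero)
    (fun p hp => by exact_mod_cast (hP p hp).ne_one)
  rw [div_eq_mul_one_div, Nat.cast_prod, ← hweight]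
  simp only [mul_sum]
  exact sum_congr rfl fun S _ => by ring
end

section
/- For k ∈ ℕ and positive integers r ≤ q, the generalized Euler–Lehmer constant satisfies γ_k(r,q) = (1/q) ∑_{j=0}^{k} C(k,j) (log q)^{k−j} γ_j(r/q) − (log q)^{k+1}/(q(k+1)), where γ_j(a) is the j-th generalized Stieltjes constant, γ_j(a) = lim_{N→∞} ( ∑_{m=0}^{N} (log(m+a))^j/(m+a) − (log(N+a))^{j+1}/(j+1) ). -/
/-!
Along the points `x = N q + r` the truncated sum runs exactly over `n = m q + r` with `m ≤ N`, and
`log (m q + r) = log q + log (m + r / q)`. Expanding binomially both the summands and the main term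
`(log x) ^ (k + 1) / (q (k + 1))` (the latter by integrating the binomial formula term by term)
writes the Euler–Lehmer sequence at these points as a fixed linear combination of the Stieltjes
sequences of `r / q`, minus the constant `(log q) ^ (k + 1) / (q (k + 1))`. Since these points tend
to infinity, the two limits must agree.
-/

open Filter Real Finset

theorem Nat.filter_Icc_mod_eq_image {q r : ℕ} (hr : 0 < r) (hrq : r ≤ q) (N : ℕ) :
    (Icc 1 (N * q + r)).filter (fun n => n % q = r % q) = (range (N + 1)).image (· * q + r) := by
  ext n
  simp only [mem_filter, mem_Icc, mem_image, mem_range, Nat.lt_succ_iff]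
  constructor
  · rintro ⟨⟨hn, hnN⟩, hmod⟩
    have hrn : r ≤ n := by
      rcases hrq.lt_or_eq with hlt | rfl
      · rw [Nat.mod_eq_of_lt hlt] at hmod
        exact hmod ▸ Nat.mod_le n q
      · exact Nat.le_of_dvd hn (Nat.dvd_of_mod_eq_zero (by simpa using hmod))
    obtain ⟨m, hm⟩ := (Nat.modEq_iff_dvd' hrn).1 hmod.symm
    refine ⟨m, Nat.le_of_mul_le_mul_left (by rw [mul_comm q N]; omega) (hr.trans_le hrq), ?_⟩
    rw [mul_comm]
    omega
  · rintro ⟨m, hm, rfl⟩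
    exact ⟨⟨by omega, by gcongr⟩, by simp⟩

theorem Nat.sum_Icc_ite_mod_eq {M : Type*} [AddCommMonoid M] {q r : ℕ} (hr : 0 < r)
    (hrq : r ≤ q) (N : ℕ) (f : ℕ → M) :
    ∑ n ∈ Icc 1 (N * q + r), (if n % q = r % q then f n else 0) =
      ∑ m ∈ range (N + 1), f (m * q + r) := by
  have hq : 0 < q := hr.trans_le hrq
  rw [← sum_filter, Nat.filter_Icc_mod_eq_image hr hrq,
    sum_image fun m₁ _ m₂ _ h => Nat.eq_of_mul_eq_mul_right hq (by simpa using h)]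

section BinomialExpansion

variable {K : Type*} [Field K]

theorem add_pow_div_mul_eq_sum (a b c x : K) (hc : c ≠ 0) (hx : x ≠ 0) (k : ℕ) :
    (a + b) ^ k / (c * x) =
      ∑ j ∈ range (k + 1), (k.choose j * a ^ (k - j) / c) * (b ^ j / x) := by
  rw [add_comm, add_pow, sum_div]
  refine sum_congr rfl fun j _ => ?_
  field_simp

theorem add_pow_succ_div_eq_sum [CharZero K] (a b : K) (k : ℕ) :
    (a + b) ^ (k + 1) / (k + 1) =
      ∑ j ∈ range (k + 1), k.choose j * a ^ (k - j) * (b ^ (j + 1) / (j + 1)) +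
        a ^ (k + 1) / (k + 1) := by
  rw [add_comm a, add_pow, sum_range_succ', add_div, sum_div]
  simp only [Nat.succ_sub_succ, pow_zero, one_mul, Nat.choose_zero_right, Nat.cast_one, mul_one]
  congr 1
  refine sum_congr rfl fun j _ => ?_
  have hchoose : ((k : K) + 1) * k.choose j = (k + 1).choose (j + 1) * ((j : K) + 1) := by
    exact_mod_cast Nat.add_one_mul_choose_eq k j
  field_simp
  linear_combination (-(b ^ (j + 1) * a ^ (k - j))) * hchoose

end BinomialExpansion

theorem Nat.cast_mul_add_eq_mul_add_div {q : ℕ} (hq : q ≠ 0) (m r : ℕ) :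
    ((m * q + r : ℕ) : ℝ) = q * (m + r / q) := by
  push_cast
  field_simp

theorem log_natCast_mul_add_eq {q r : ℕ} (hr : 0 < r) (hq : q ≠ 0) (m : ℕ) :
    log ((m * q + r : ℕ) : ℝ) = log q + log (m + r / q) := by
  rw [Nat.cast_mul_add_eq_mul_add_div hq, log_mul (by exact_mod_cast hq) (by positivity)]

theorem eulerLehmer_partialSum_at_mul_add_eq {k r q : ℕ} (hr : 0 < r) (hrq : r ≤ q) (N : ℕ) :
    (∑ n ∈ Icc 1 (N * q + r), if n % q = r % q then log n ^ k / (n : ℝ) else 0) -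
        log ((N * q + r : ℕ) : ℝ) ^ (k + 1) / (q * (k + 1)) =
      ∑ j ∈ range (k + 1), (k.choose j * log q ^ (k - j) / q) *
          ((∑ m ∈ range (N + 1), log ((m : ℝ) + r / q) ^ j / ((m : ℝ) + r / q)) -
            log ((N : ℝ) + r / q) ^ (j + 1) / (j + 1)) -
        log q ^ (k + 1) / (q * (k + 1)) := by
  have hq : q ≠ 0 := (hr.trans_le hrq).ne'
  have hqR : (q : ℝ) ≠ 0 := by exact_mod_cast hq
  have hsum :
      ∑ m ∈ range (N + 1), log ((m * q + r : ℕ) : ℝ) ^ k / ((m * q + r : ℕ) : ℝ) =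
      ∑ j ∈ range (k + 1), (k.choose j * log q ^ (k - j) / q) *
        ∑ m ∈ range (N + 1), log ((m : ℝ) + r / q) ^ j / ((m : ℝ) + r / q) := by
    simp_rw [mul_sum]
    rw [sum_comm]
    refine sum_congr rfl fun m _ => ?_
    rw [log_natCast_mul_add_eq hr hq, Nat.cast_mul_add_eq_mul_add_div hq]
    exact add_pow_div_mul_eq_sum _ _ _ _ hqR (by positivity) k
  have hlast : log ((N * q + r : ℕ) : ℝ) ^ (k + 1) / (q * (k + 1)) =
      ∑ j ∈ range (k + 1), (k.choose j * log q ^ (k - j) / q) *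
        (log ((N : ℝ) + r / q) ^ (j + 1) / (j + 1)) + log q ^ (k + 1) / (q * (k + 1)) := by
    rw [log_natCast_mul_add_eq hr hq, mul_comm (q : ℝ), ← div_div, add_pow_succ_div_eq_sum,
      add_div, sum_div]
    congr 1
    · exact sum_congr rfl fun j _ => by ring
    · rw [div_div, mul_comm]
  rw [Nat.sum_Icc_ite_mod_eq hr hrq, hsum, hlast]
  simp only [mul_sub, sum_sub_distrib]
  ring

/-- `γ_k(r,q) = (1/q) ∑_{j=0}^{k} C(k,j) (log q)^{k-j} γ_j(r/q) − (log q)^{k+1}/(q(k+1))`,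
relating generalized Euler–Lehmer constants to generalized Stieltjes constants. -/
theorem stmt19 (k : ℕ) (r q : ℕ) (hr : 0 < r) (hrq : r ≤ q)
    (G : ℝ) (γ : ℕ → ℝ)
    (hG : Tendsto (fun x : ℝ =>
        (∑ n ∈ Finset.Icc 1 ⌊x⌋₊, if n % q = r % q then Real.log n ^ k / (n : ℝ) else 0) -
          Real.log x ^ (k + 1) / (q * (k + 1)))
      atTop (nhds G))
    (hγ : ∀ j ∈ Finset.range (k + 1),
      Tendsto (fun N : ℕ =>
          (∑ m ∈ Finset.range (N + 1),
            Real.log ((m : ℝ) + (r : ℝ) / q) ^ j / ((m : ℝ) + (r : ℝ) / q)) -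
            Real.log ((N : ℝ) + (r : ℝ) / q) ^ (j + 1) / (j + 1))
        atTop (nhds (γ j))) :
    G = (1 / (q : ℝ)) * (∑ j ∈ Finset.range (k + 1),
          (Nat.choose k j : ℝ) * Real.log q ^ (k - j) * γ j) -
        Real.log q ^ (k + 1) / (q * (k + 1)) := by
  have hsample : Tendsto (fun N : ℕ => ((N * q + r : ℕ) : ℝ)) atTop atTop :=
    tendsto_natCast_atTop_atTop.comp <| tendsto_atTop_mono
      (fun N => (Nat.le_mul_of_pos_right N (hr.trans_le hrq)).trans (Nat.le_add_right _ r))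
      tendsto_id
  have hG' := (hG.comp hsample).congr fun N => by
    simpa only [Function.comp_apply, Nat.floor_natCast] using
      eulerLehmer_partialSum_at_mul_add_eq hr hrq N
  have hlim := (tendsto_finsetSum _ fun j hj =>
    (hγ j hj).const_mul (k.choose j * log q ^ (k - j) / q)).sub_const
      (log q ^ (k + 1) / (q * (k + 1)))
  rw [tendsto_nhds_unique hG' hlim, mul_sum]
  exact congrArg (· - _) (sum_congr rfl fun j _ => by ring)
end
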